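/- arXiv:math/0305411 — 4 statements merged into one kernel-verified Lean document; each statement's English description precedes it below -/
import Mathlib

section
/- Let K be a convex body in ℝ^n, let α : K → ℝ and let v ∈ ℝ^n \ {0}. For each t in an interval of ℝ on which the sets K_t = conv{ x + t α(x) v : x ∈ K } are defined, the function t ↦ vol_n(K_t) is convex. -/
open MeasureTheory Set Bornology

namespace RSaux

noncomputable section

variable {m : ℕ}

abbrev E (m : ℕ) := EuclideanSpace ℝ (Fin (m+1))

def e0 (m : ℕ) : E m := EuclideanSpace.single 0 1

lemma e0_apply_zero : e0 m 0 = 1 := by simp [e0]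

lemma e0_apply_succ (j : Fin m) : e0 m j.succ = 0 := by
  simp [e0, EuclideanSpace.single_apply, Fin.succ_ne_zero]

/-- The shift linear map `T_t (x, s) = x + (t s) • e₀`. -/
def Tt (m : ℕ) (t : ℝ) : E m × ℝ →ₗ[ℝ] E m :=
  LinearMap.fst ℝ (E m) ℝ + (t • LinearMap.snd ℝ (E m) ℝ).smulRight (e0 m)

lemma Tt_apply (t : ℝ) (p : E m × ℝ) : Tt m t p = p.1 + (t * p.2) • e0 m := by
  simp [Tt, smul_eq_mul]

/-- first coordinate functional -/
def c0 (m : ℕ) : E m →ₗ[ℝ] ℝ :=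
  (LinearMap.proj 0).comp (WithLp.linearEquiv 2 ℝ (Fin (m+1) → ℝ)).toLinearMap

lemma c0_apply (x : E m) : c0 m x = x 0 := rfl

def phi (m : ℕ) (t : ℝ) : E m × ℝ →ₗ[ℝ] ℝ :=
  (c0 m).comp (LinearMap.fst ℝ (E m) ℝ) + t • LinearMap.snd ℝ (E m) ℝ

lemma phi_apply (t : ℝ) (p : E m × ℝ) : phi m t p = p.1 0 + t * p.2 := rfl

def ρ (m : ℕ) : E m × ℝ →ₗ[ℝ] (Fin m → ℝ) :=
  (LinearMap.funLeft ℝ ℝ Fin.succ).comp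
    ((WithLp.linearEquiv 2 ℝ (Fin (m+1) → ℝ)).toLinearMap.comp (LinearMap.fst ℝ (E m) ℝ))

lemma ρ_apply (p : E m × ℝ) (j : Fin m) : ρ m p j = p.1 j.succ := rfl

def Ψ (m : ℕ) : E m ≃ᵐ ℝ × (Fin m → ℝ) :=
  (MeasurableEquiv.toLp 2 (Fin (m+1) → ℝ)).symm.trans
    (MeasurableEquiv.piFinSuccAbove (fun _ : Fin (m+1) => ℝ) 0)

lemma Ψ_apply (x : E m) : Ψ m x = (x 0, fun j => x j.succ) := rfl

lemma Ψ_measurePreserving : MeasurePreserving (Ψ m) volume volume :=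
  (measurePreserving_piFinSuccAbove (fun _ : Fin (m+1) => (volume : Measure ℝ)) 0).comp
    (EuclideanSpace.volume_preserving_symm_measurableEquiv_toLp (Fin (m+1)))

/-- The moving convex hull. -/
def hullSet (m : ℕ) (K : Set (E m)) (α : E m → ℝ) (t : ℝ) : Set (E m) :=
  convexHull ℝ ((fun x => x + (t * α x) • e0 m) '' K)

/-- The closed convex hull of the graph of `α` over `K`. -/
def Cset (m : ℕ) (K : Set (E m)) (α : E m → ℝ) : Set (E m × ℝ) :=
  closure (convexHull ℝ ((fun x => (x, α x)) '' K))

variable {K : Set (E m)} {α : E m → ℝ}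

lemma Cset_convex : Convex ℝ (Cset m K α) := (convex_convexHull ℝ _).closure

lemma Cset_compact (hKb : IsBounded K) {R : ℝ} (hα : ∀ x ∈ K, |α x| ≤ R) :
    IsCompact (Cset m K α) := by
  have h1 : ((fun x => (x, α x)) '' K) ⊆ K ×ˢ Metric.closedBall (0 : ℝ) R := by
    rintro _ ⟨x, hx, rfl⟩
    refine ⟨hx, ?_⟩
    simpa [Real.dist_eq] using hα x hx
  have h2 : IsBounded ((fun x => (x, α x)) '' K) :=
    (hKb.prod Metric.isBounded_closedBall).subset h1
  exact (isBounded_convexHull.mpr h2).isCompact_closure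

lemma Tt_graph_image (t : ℝ) : Tt m t '' ((fun x => (x, α x)) '' K)
    = (fun x => x + (t * α x) • e0 m) '' K := by
  rw [← image_comp]
  apply image_congr
  intro x _
  simp [Tt_apply]

lemma closure_hullSet_eq (hKb : IsBounded K) {R : ℝ} (hα : ∀ x ∈ K, |α x| ≤ R) (t : ℝ) :
    closure (hullSet m K α t) = Tt m t '' Cset m K α := by
  have hCc := Cset_compact (α := α) hKb hα
  have hTc : Continuous (Tt m t) := (Tt m t).continuous_of_finiteDimensional
  have himgc : IsCompact (Tt m t '' Cset m K α) := hCc.image hTc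
  apply le_antisymm
  · -- closure hull ⊆ image
    apply closure_minimal _ himgc.isClosed
    apply convexHull_min _ (Cset_convex.linear_image (Tt m t))
    rw [← Tt_graph_image (α := α) (K := K) t]
    exact image_mono (subset_closure.trans (closure_mono (subset_convexHull ℝ _)))
  · -- image ⊆ closure hull
    rw [Cset]
    calc Tt m t '' closure (convexHull ℝ ((fun x => (x, α x)) '' K))
        ⊆ closure (Tt m t '' convexHull ℝ ((fun x => (x, α x)) '' K)) :=
          image_closure_subset_closure_image hTc
      _ = closure (convexHull ℝ (Tt m t '' ((fun x => (x, α x)) '' K))) := by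
          rw [(Tt m t).image_convexHull]
      _ = closure (hullSet m K α t) := by rw [Tt_graph_image, hullSet]

lemma Tt_apply_zero (t : ℝ) (p : E m × ℝ) : Tt m t p 0 = p.1 0 + t * p.2 := by
  simp [Tt_apply, e0_apply_zero]

lemma Tt_apply_succ (t : ℝ) (p : E m × ℝ) (j : Fin m) : Tt m t p j.succ = p.1 j.succ := by
  simp [Tt_apply, e0_apply_succ]

lemma volume_closure_eq (S : Set (E m)) (hS : Convex ℝ S) :
    volume (closure S) = volume S := by
  have hfr : volume (frontier S) = 0 := hS.addHaar_frontier volume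
  apply le_antisymm
  · calc volume (closure S) ≤ volume (S ∪ frontier S) := by
          apply measure_mono
          intro x hx
          by_cases h : x ∈ S
          · exact Or.inl h
          · exact Or.inr ⟨hx, fun h' => h (interior_subset h')⟩
      _ ≤ volume S + volume (frontier S) := measure_union_le _ _
      _ = volume S := by rw [hfr, add_zero]
  · exact measure_mono subset_closure

lemma section_eq (t : ℝ) (y : Fin m → ℝ) :
    (fun u => (u, y)) ⁻¹' (Ψ m '' (Tt m t '' Cset m K α))
      = phi m t '' (Cset m K α ∩ ρ m ⁻¹' {y}) := by
  ext u
  simp only [mem_preimage, mem_image, mem_inter_iff, mem_singleton_iff, exists_exists_and_eq_and]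
  constructor
  · rintro ⟨p, hp, hz⟩
    rw [Ψ_apply] at hz
    have h1 : Tt m t p 0 = u := congrArg Prod.fst hz
    have h2 : (fun j => Tt m t p j.succ) = y := congrArg Prod.snd hz
    refine ⟨p, ⟨hp, ?_⟩, ?_⟩
    · funext j
      rw [ρ_apply, ← Tt_apply_succ t p j]
      exact congrFun h2 j
    · rw [phi_apply, ← Tt_apply_zero, h1]
  · rintro ⟨p, ⟨hp, hy⟩, hu⟩
    refine ⟨p, hp, ?_⟩
    have h2 : (fun j => Tt m t p j.succ) = y := by
      funext j; rw [Tt_apply_succ, ← ρ_apply, hy]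
    have h1 : Tt m t p 0 = u := by rw [Tt_apply_zero, ← phi_apply, hu]
    rw [Ψ_apply, h1, h2]

lemma fiber_le (hKb : IsBounded K) {R : ℝ} (hα : ∀ x ∈ K, |α x| ≤ R)
    (t0 t1 a b : ℝ) (y : Fin m → ℝ) (ha : 0 ≤ a) (hb : 0 ≤ b) (hab : a + b = 1) :
    volume (phi m (a*t0+b*t1) '' (Cset m K α ∩ ρ m ⁻¹' {y}))
      ≤ ENNReal.ofReal a * volume (phi m t0 '' (Cset m K α ∩ ρ m ⁻¹' {y}))
        + ENNReal.ofReal b * volume (phi m t1 '' (Cset m K α ∩ ρ m ⁻¹' {y})) := by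
  set Cy : Set (E m × ℝ) := Cset m K α ∩ ρ m ⁻¹' {y} with hCy
  rcases Cy.eq_empty_or_nonempty with h | h
  · simp [h]
  have hCyc : IsCompact Cy :=
    (Cset_compact hKb hα).inter_right
      (isClosed_singleton.preimage (ρ m).continuous_of_finiteDimensional)
  have hCyconv : Convex ℝ Cy :=
    Cset_convex.inter ((convex_singleton y).linear_preimage (ρ m))
  have him : ∀ t : ℝ, IsCompact (phi m t '' Cy) := fun t =>
    hCyc.image (phi m t).continuous_of_finiteDimensional
  have hne : ∀ t : ℝ, (phi m t '' Cy).Nonempty := fun t => h.image _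
  set S0 := sSup (phi m t0 '' Cy) with hS0
  set I0 := sInf (phi m t0 '' Cy) with hI0
  set S1 := sSup (phi m t1 '' Cy) with hS1
  set I1 := sInf (phi m t1 '' Cy) with hI1
  have hS0mem : S0 ∈ phi m t0 '' Cy := (him t0).sSup_mem (hne t0)
  have hI0mem : I0 ∈ phi m t0 '' Cy := (him t0).sInf_mem (hne t0)
  have hS1mem : S1 ∈ phi m t1 '' Cy := (him t1).sSup_mem (hne t1)
  have hI1mem : I1 ∈ phi m t1 '' Cy := (him t1).sInf_mem (hne t1)
  have hIle0 : I0 ≤ S0 := csInf_le ((him t0).bddBelow) hS0mem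
  have hIle1 : I1 ≤ S1 := csInf_le ((him t1).bddBelow) hS1mem
  have hIcc0 : Icc I0 S0 ⊆ phi m t0 '' Cy :=
    ((hCyconv.linear_image (phi m t0)).ordConnected).out hI0mem hS0mem
  have hIcc1 : Icc I1 S1 ⊆ phi m t1 '' Cy :=
    ((hCyconv.linear_image (phi m t1)).ordConnected).out hI1mem hS1mem
  have hsub : phi m (a*t0+b*t1) '' Cy ⊆ Icc (a*I0+b*I1) (a*S0+b*S1) := by
    rintro _ ⟨p, hp, rfl⟩
    have key : phi m (a*t0+b*t1) p = a * phi m t0 p + b * phi m t1 p := by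
      simp only [phi_apply]
      have : a * (p.1 0 + t0 * p.2) + b * (p.1 0 + t1 * p.2)
          = (a + b) * p.1 0 + (a*t0+b*t1) * p.2 := by ring
      rw [this, hab, one_mul]
    constructor
    · rw [key]
      have h0 : I0 ≤ phi m t0 p := csInf_le ((him t0).bddBelow) (mem_image_of_mem _ hp)
      have h1 : I1 ≤ phi m t1 p := csInf_le ((him t1).bddBelow) (mem_image_of_mem _ hp)
      exact add_le_add (mul_le_mul_of_nonneg_left h0 ha) (mul_le_mul_of_nonneg_left h1 hb)
    · rw [key]
      have h0 : phi m t0 p ≤ S0 := le_csSup ((him t0).bddAbove) (mem_image_of_mem _ hp)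
      have h1 : phi m t1 p ≤ S1 := le_csSup ((him t1).bddAbove) (mem_image_of_mem _ hp)
      exact add_le_add (mul_le_mul_of_nonneg_left h0 ha) (mul_le_mul_of_nonneg_left h1 hb)
  calc volume (phi m (a*t0+b*t1) '' Cy) ≤ volume (Icc (a*I0+b*I1) (a*S0+b*S1)) :=
        measure_mono hsub
    _ = ENNReal.ofReal ((a*S0+b*S1) - (a*I0+b*I1)) := Real.volume_Icc
    _ = ENNReal.ofReal (a*(S0-I0) + b*(S1-I1)) := by ring_nf
    _ = ENNReal.ofReal (a*(S0-I0)) + ENNReal.ofReal (b*(S1-I1)) :=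
        ENNReal.ofReal_add (mul_nonneg ha (sub_nonneg.2 hIle0))
          (mul_nonneg hb (sub_nonneg.2 hIle1))
    _ = ENNReal.ofReal a * ENNReal.ofReal (S0-I0)
          + ENNReal.ofReal b * ENNReal.ofReal (S1-I1) := by
        rw [ENNReal.ofReal_mul ha, ENNReal.ofReal_mul hb]
    _ ≤ ENNReal.ofReal a * volume (phi m t0 '' Cy)
          + ENNReal.ofReal b * volume (phi m t1 '' Cy) := by
        apply add_le_add
        · apply mul_le_mul_right
          calc ENNReal.ofReal (S0 - I0) = volume (Icc I0 S0) := Real.volume_Icc.symm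
            _ ≤ volume (phi m t0 '' Cy) := measure_mono hIcc0
        · apply mul_le_mul_right
          calc ENNReal.ofReal (S1 - I1) = volume (Icc I1 S1) := Real.volume_Icc.symm
            _ ≤ volume (phi m t1 '' Cy) := measure_mono hIcc1

lemma measurableSet_psi_img (hKb : IsBounded K) {R : ℝ} (hα : ∀ x ∈ K, |α x| ≤ R) (t : ℝ) :
    MeasurableSet (Ψ m '' (Tt m t '' Cset m K α)) := by
  have hcomp : IsCompact (Tt m t '' Cset m K α) :=
    (Cset_compact hKb hα).image (Tt m t).continuous_of_finiteDimensional
  rw [MeasurableEquiv.image_eq_preimage_symm]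
  exact (Ψ m).symm.measurable hcomp.isClosed.measurableSet

lemma volume_Tt_eq (hKb : IsBounded K) {R : ℝ} (hα : ∀ x ∈ K, |α x| ≤ R) (t : ℝ) :
    volume (Tt m t '' Cset m K α)
      = ∫⁻ y, volume ((fun u => (u, y)) ⁻¹' (Ψ m '' (Tt m t '' Cset m K α))) := by
  have hcomp : IsCompact (Tt m t '' Cset m K α) :=
    (Cset_compact hKb hα).image (Tt m t).continuous_of_finiteDimensional
  have h1 : volume (Ψ m '' (Tt m t '' Cset m K α)) = volume (Tt m t '' Cset m K α) := by
    rw [MeasurableEquiv.image_eq_preimage_symm]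
    exact (Ψ_measurePreserving.symm (Ψ m)).measure_preimage
      hcomp.isClosed.measurableSet.nullMeasurableSet
  rw [← h1, Measure.volume_eq_prod, Measure.prod_apply_symm (measurableSet_psi_img hKb hα t)]

lemma master (hKb : IsBounded K) {R : ℝ} (hα : ∀ x ∈ K, |α x| ≤ R)
    (t0 t1 a b : ℝ) (ha : 0 ≤ a) (hb : 0 ≤ b) (hab : a + b = 1) :
    volume (hullSet m K α (a*t0+b*t1))
      ≤ ENNReal.ofReal a * volume (hullSet m K α t0)
        + ENNReal.ofReal b * volume (hullSet m K α t1) := by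
  have hvol : ∀ t : ℝ, volume (hullSet m K α t) = volume (Tt m t '' Cset m K α) := fun t => by
    rw [← closure_hullSet_eq hKb hα t]
    exact (volume_closure_eq _ (convex_convexHull ℝ _)).symm
  rw [hvol, hvol, hvol, volume_Tt_eq hKb hα, volume_Tt_eq hKb hα, volume_Tt_eq hKb hα]
  have hmeas0 : Measurable (fun y : Fin m → ℝ =>
      (volume : Measure ℝ) ((fun u => (u, y)) ⁻¹' (Ψ m '' (Tt m t0 '' Cset m K α)))) :=
    measurable_measure_prodMk_right (measurableSet_psi_img hKb hα t0)
  have hmeas1 : Measurable (fun y : Fin m → ℝ =>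
      (volume : Measure ℝ) ((fun u => (u, y)) ⁻¹' (Ψ m '' (Tt m t1 '' Cset m K α)))) :=
    measurable_measure_prodMk_right (measurableSet_psi_img hKb hα t1)
  calc (∫⁻ y, volume ((fun u => (u, y)) ⁻¹' (Ψ m '' (Tt m (a*t0+b*t1) '' Cset m K α))))
      ≤ ∫⁻ y, (ENNReal.ofReal a
            * volume ((fun u => (u, y)) ⁻¹' (Ψ m '' (Tt m t0 '' Cset m K α)))
          + ENNReal.ofReal b
            * volume ((fun u => (u, y)) ⁻¹' (Ψ m '' (Tt m t1 '' Cset m K α)))) := by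
        apply lintegral_mono
        intro y
        dsimp only
        rw [section_eq, section_eq, section_eq]
        exact fiber_le hKb hα t0 t1 a b y ha hb hab
    _ = (ENNReal.ofReal a
            * ∫⁻ y, volume ((fun u => (u, y)) ⁻¹' (Ψ m '' (Tt m t0 '' Cset m K α))))
        + ENNReal.ofReal b
            * ∫⁻ y, volume ((fun u => (u, y)) ⁻¹' (Ψ m '' (Tt m t1 '' Cset m K α))) := by
        rw [lintegral_add_left (hmeas0.const_mul _), lintegral_const_mul _ hmeas0,
          lintegral_const_mul _ hmeas1]

end

end RSaux

open RSaux in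
/-- **Rogers–Shephard.** Let `K` be a convex body in `ℝ^n`, `α : K → ℝ` a (bounded) speed
function and `v ≠ 0`. On any interval `I` on which the sets
`K_t = conv { x + t α(x) v : x ∈ K }` are defined (i.e. are bounded, so that they are
convex bodies), the function `t ↦ vol_n (K_t)` is convex. -/
theorem volume_convex_of_linearParameterSystem
    {n : ℕ} (K : Set (EuclideanSpace ℝ (Fin n)))
    (hKcomp : IsCompact K) (hKconv : Convex ℝ K) (hKint : (interior K).Nonempty)
    (α : EuclideanSpace ℝ (Fin n) → ℝ) (v : EuclideanSpace ℝ (Fin n)) (hv : v ≠ 0)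
    (I : Set ℝ) (hI : Convex ℝ I)
    (hdef : ∀ t ∈ I, Bornology.IsBounded
      (convexHull ℝ ((fun x => x + (t * α x) • v) '' K))) :
    ConvexOn ℝ I (fun t =>
      (volume (convexHull ℝ ((fun x => x + (t * α x) • v) '' K))).toReal) := by
  refine ⟨hI, ?_⟩
  intro t0 ht0 t1 ht1 a b ha hb hab
  simp only [smul_eq_mul]
  rcases eq_or_ne t0 t1 with rfl | hne
  · have harg : a * t0 + b * t0 = t0 := by rw [← add_mul, hab, one_mul]
    rw [harg]
    have : a * (volume (convexHull ℝ ((fun x => x + (t0 * α x) • v) '' K))).toReal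
        + b * (volume (convexHull ℝ ((fun x => x + (t0 * α x) • v) '' K))).toReal
        = (volume (convexHull ℝ ((fun x => x + (t0 * α x) • v) '' K))).toReal := by
      rw [← add_mul, hab, one_mul]
    rw [this]
  · cases n with
  | zero =>
      exfalso
      apply hv
      haveI : Subsingleton (EuclideanSpace ℝ (Fin 0)) :=
        ⟨fun x y => by ext i; exact i.elim0⟩
      exact Subsingleton.elim v 0
  | succ m =>
    have hvnorm : (0:ℝ) < ‖v‖ := norm_pos_iff.mpr hv
    have htt : (0:ℝ) < |t1 - t0| := abs_pos.mpr (sub_ne_zero.mpr (Ne.symm hne))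
    obtain ⟨R0, hR0⟩ := (hdef t0 ht0).subset_closedBall 0
    obtain ⟨R1, hR1⟩ := (hdef t1 ht1).subset_closedBall 0
    set R := (R0 + R1) / (|t1 - t0| * ‖v‖) with hRdef
    have hα : ∀ x ∈ K, |α x| ≤ R := by
      intro x hx
      have h0 : x + (t0 * α x) • v ∈ Metric.closedBall (0 : EuclideanSpace ℝ (Fin (m+1))) R0 :=
        hR0 (subset_convexHull ℝ _ (mem_image_of_mem _ hx))
      have h1 : x + (t1 * α x) • v ∈ Metric.closedBall (0 : EuclideanSpace ℝ (Fin (m+1))) R1 :=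
        hR1 (subset_convexHull ℝ _ (mem_image_of_mem _ hx))
      rw [mem_closedBall_zero_iff] at h0 h1
      have hdiffeq : ((t1 - t0) * α x) • v
          = (x + (t1 * α x) • v) - (x + (t0 * α x) • v) := by
        have : (t1 - t0) * α x = t1 * α x - t0 * α x := by ring
        rw [this, sub_smul]
        abel
      have hdiff : |t1 - t0| * |α x| * ‖v‖ ≤ R0 + R1 := by
        have := norm_sub_le (x + (t1 * α x) • v) (x + (t0 * α x) • v)
        rw [← hdiffeq, norm_smul, Real.norm_eq_abs, abs_mul] at this
        have h2 := this.trans (add_le_add h1 h0)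
        linarith [h2]
      rw [hRdef, le_div_iff₀ (by positivity)]
      nlinarith [hdiff]
    -- rotate so that `v` becomes `‖v‖ • e₀`
    set u : EuclideanSpace ℝ (Fin (m+1)) := ‖v‖⁻¹ • v with hu
    have hON : Orthonormal ℝ (({0} : Set (Fin (m+1))).restrict
        (fun _ : Fin (m+1) => u)) := by
      constructor
      · intro i
        simpa [u, Set.restrict] using norm_smul_inv_norm (𝕜 := ℝ) hv
      · intro i j hij
        exact absurd (Subsingleton.elim i j) hij
    obtain ⟨bB, hbB⟩ := hON.exists_orthonormalBasis_extension_of_card_eq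
      (by simp)
    have hb0 : bB 0 = u := hbB 0 rfl
    set L := bB.repr with hL
    have hLv : L v = ‖v‖ • EuclideanSpace.single (0 : Fin (m+1)) (1:ℝ) := by
      have hvu : v = ‖v‖ • u := by rw [hu, smul_inv_smul₀ (ne_of_gt hvnorm)]
      nth_rewrite 1 [hvu]
      rw [L.map_smul, ← hb0, hL, OrthonormalBasis.repr_self]
    set β : EuclideanSpace ℝ (Fin (m+1)) → ℝ := fun z => ‖v‖ * α (L.symm z) with hβdef
    set K' : Set (EuclideanSpace ℝ (Fin (m+1))) := ⇑L '' K with hK'def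
    have hK'b : Bornology.IsBounded K' := (hKcomp.image L.continuous).isBounded
    have hβ : ∀ z ∈ K', |β z| ≤ ‖v‖ * R := by
      rintro _ ⟨x, hx, rfl⟩
      rw [hβdef]
      simp only [L.symm_apply_apply]
      rw [abs_mul, abs_norm]
      exact mul_le_mul_of_nonneg_left (hα x hx) (norm_nonneg v)
    have himg : ∀ t : ℝ, ⇑L '' ((fun x => x + (t * α x) • v) '' K)
        = (fun z => z + (t * β z) • e0 m) '' K' := by
      intro t
      rw [hK'def, ← image_comp, ← image_comp]
      apply image_congr
      intro x _
      simp only [Function.comp_apply]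
      rw [L.map_add, L.map_smul, hLv, smul_smul]
      have hβL : β (L x) = ‖v‖ * α x := by
        rw [hβdef]; simp only [L.symm_apply_apply]
      rw [hβL]
      have : t * α x * ‖v‖ = t * (‖v‖ * α x) := by ring
      rw [this, e0]
    have hveq : ∀ t : ℝ, volume (convexHull ℝ ((fun x => x + (t * α x) • v) '' K))
        = volume (hullSet m K' β t) := by
      intro t
      have h2 : ⇑L '' (convexHull ℝ ((fun x => x + (t * α x) • v) '' K))
          = hullSet m K' β t := by
        rw [hullSet, ← himg t]
        have := L.toLinearEquiv.toLinearMap.image_convexHull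
          ((fun x => x + (t * α x) • v) '' K)
        simpa using this
      have h3 : volume (⇑L '' (convexHull ℝ ((fun x => x + (t * α x) • v) '' K)))
          = volume (convexHull ℝ ((fun x => x + (t * α x) • v) '' K)) := by
        rw [L.image_eq_preimage_symm]
        exact (bB.measurePreserving_repr_symm).measure_preimage
          ((convex_convexHull ℝ _).nullMeasurableSet volume)
      rw [← h3, h2]
    have key := master (K := K') (α := β) hK'b hβ t0 t1 a b ha hb hab
    rw [← hveq, ← hveq, ← hveq] at key
    have hfin : ∀ s ∈ I, volume (convexHull ℝ ((fun x => x + (s * α x) • v) '' K)) ≠ ⊤ :=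
      fun s hs => ((hdef s hs).measure_lt_top).ne
    have h0 := hfin t0 ht0
    have h1 := hfin t1 ht1
    have hRHS : ENNReal.ofReal a * volume (convexHull ℝ ((fun x => x + (t0 * α x) • v) '' K))
        + ENNReal.ofReal b * volume (convexHull ℝ ((fun x => x + (t1 * α x) • v) '' K)) ≠ ⊤ :=
      ENNReal.add_ne_top.2 ⟨ENNReal.mul_ne_top ENNReal.ofReal_ne_top h0,
        ENNReal.mul_ne_top ENNReal.ofReal_ne_top h1⟩
    calc (volume (convexHull ℝ ((fun x => x + ((a * t0 + b * t1) * α x) • v) '' K))).toReal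
        ≤ (ENNReal.ofReal a * volume (convexHull ℝ ((fun x => x + (t0 * α x) • v) '' K))
          + ENNReal.ofReal b
            * volume (convexHull ℝ ((fun x => x + (t1 * α x) • v) '' K))).toReal :=
          ENNReal.toReal_mono hRHS key
      _ = a * (volume (convexHull ℝ ((fun x => x + (t0 * α x) • v) '' K))).toReal
          + b * (volume (convexHull ℝ ((fun x => x + (t1 * α x) • v) '' K))).toReal := by
          rw [ENNReal.toReal_add (ENNReal.mul_ne_top ENNReal.ofReal_ne_top h0)
              (ENNReal.mul_ne_top ENNReal.ofReal_ne_top h1),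
            ENNReal.toReal_mul, ENNReal.toReal_mul,
            ENNReal.toReal_ofReal ha, ENNReal.toReal_ofReal hb]
end

section
/- Every symmetric parallelogram P in ℝ² (i.e., the image of [-1,1]² under an invertible linear map) is SRS-indecomposable. -/
open MeasureTheory Set
open scoped RealInnerProductSpace

noncomputable section

variable {E : Type*} [NormedAddCommGroup E] [InnerProductSpace ℝ E]

/-- Orthogonal projection `π_v` onto the hyperplane `v^⊥`. -/
def projPerp (v x : E) : E := x - (⟪x, v⟫ / ⟪v, v⟫) • v

/-- The family of sets `K_t = { x + t β(π_v(x)) v : x ∈ K }` underlying an RS-movement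
with direction `v` and speed function `β`. -/
def RSFamily (K : Set E) (v : E) (β : E → ℝ) (t : ℝ) : Set E :=
  (fun x => x + (t * β (projPerp v x)) • v) '' K

/-- A symmetric convex body `K` is SRS-decomposable if there are `ε > 0`, a direction
`v ≠ 0` and a speed function `β` which is odd on `π_v(K)` and is not the restriction of a
linear functional, such that `K_t` is convex for every `t ∈ (-ε, ε)`
(note `K_0 = K` automatically). -/
def IsSRSDecomposable (K : Set E) : Prop :=
  ∃ (v : E) (β : E → ℝ) (ε : ℝ), 0 < ε ∧ v ≠ 0 ∧
    (∀ x ∈ projPerp v '' K, β (-x) = -β x) ∧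
    (∀ t ∈ Set.Ioo (-ε) ε, Convex ℝ (RSFamily K v β t)) ∧
    ¬∃ ℓ : E →ₗ[ℝ] ℝ, ∀ x ∈ projPerp v '' K, β x = ℓ x

/-! ### Auxiliary 1-dimensional lemmas -/

/-- `g` is affine on the segment from `q` to `p`. -/
def AffOn (g : ℝ → ℝ) (p q : ℝ) : Prop :=
  ∀ s : ℝ, 0 ≤ s → s ≤ 1 → g (s * p + (1 - s) * q) = s * g p + (1 - s) * g q

lemma affOn_self (g : ℝ → ℝ) (p : ℝ) : AffOn g p p := by
  intro s h0 h1
  have e : s * p + (1 - s) * p = p := by ring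
  rw [e]; ring

lemma affOn_symm {g : ℝ → ℝ} {p q : ℝ} (h : AffOn g p q) : AffOn g q p := by
  intro s h0 h1
  have h' := h (1 - s) (by linarith) (by linarith)
  have e : (1 - s) * p + (1 - (1 - s)) * q = s * q + (1 - s) * p := by ring
  rw [e] at h'
  rw [h']; ring

lemma affOn_neg {g : ℝ → ℝ} {m p q : ℝ} (hodd : ∀ s, |s| ≤ m → g (-s) = -g s)
    (hp : |p| ≤ m) (hq : |q| ≤ m) (h : AffOn g p q) : AffOn g (-p) (-q) := by
  intro s h0 h1
  have hb : |s * p + (1 - s) * q| ≤ m := by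
    calc |s * p + (1 - s) * q| ≤ s * |p| + (1 - s) * |q| := by
          refine (abs_add_le _ _).trans ?_
          rw [abs_mul, abs_mul, abs_of_nonneg h0,
            abs_of_nonneg (by linarith : (0:ℝ) ≤ 1 - s)]
      _ ≤ s * m + (1 - s) * m := by
          have := abs_nonneg p
          have := abs_nonneg q
          nlinarith
      _ = m := by ring
  have e : s * (-p) + (1 - s) * (-q) = -(s * p + (1 - s) * q) := by ring
  rw [e, hodd _ hb, h s h0 h1, hodd p hp, hodd q hq]
  ring

lemma lin_core {g : ℝ → ℝ} {a b : ℝ} (ha : 0 < a) (hb : 0 ≤ b) (hba : b ≤ a)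
    (hodd : ∀ s, |s| ≤ a → g (-s) = -g s)
    (h2 : AffOn g a (-b)) (h3 : AffOn g (-a) b) :
    ∀ s, |s| ≤ a → g s = g a / a * s := by
  have hane : a ≠ 0 := ne_of_gt ha
  have hab : 0 < a + b := by linarith
  have habne : a + b ≠ 0 := ne_of_gt hab
  have g0 : g 0 = 0 := by
    have h := hodd 0 (by simp; linarith)
    simp at h
    linarith
  have gna : g (-a) = -g a := hodd a (by rw [abs_of_pos ha])
  have gnb : g (-b) = -(b / a * g a) := by
    have hs := h2 (b / (a + b)) (by positivity) (by rw [div_le_one hab]; linarith)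
    have e : b / (a + b) * a + (1 - b / (a + b)) * (-b) = 0 := by field_simp; ring
    rw [e, g0] at hs
    have e2 : 1 - b / (a + b) = a / (a + b) := by field_simp; ring
    rw [e2] at hs
    field_simp at hs ⊢
    linarith
  have gb : g b = b / a * g a := by
    have h := hodd b (by rw [abs_of_nonneg hb]; exact hba)
    rw [gnb] at h
    linarith
  intro s hs
  rw [abs_le] at hs
  rcases le_or_gt (-b) s with hcase | hcase
  · have hσ0 : (0:ℝ) ≤ (s + b) / (a + b) := div_nonneg (by linarith) hab.le
    have hσ1 : (s + b) / (a + b) ≤ 1 := by rw [div_le_one hab]; linarith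
    have hs2 := h2 _ hσ0 hσ1
    have e : (s + b) / (a + b) * a + (1 - (s + b) / (a + b)) * (-b) = s := by
      field_simp; ring
    rw [e, gnb] at hs2
    rw [hs2]
    field_simp
    ring
  · have hσ0 : (0:ℝ) ≤ (b - s) / (a + b) := div_nonneg (by linarith) hab.le
    have hσ1 : (b - s) / (a + b) ≤ 1 := by rw [div_le_one hab]; linarith
    have hs3 := h3 _ hσ0 hσ1
    have e : (b - s) / (a + b) * (-a) + (1 - (b - s) / (a + b)) * b = s := by
      field_simp; ring
    rw [e, gna, gb] at hs3
    rw [hs3]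
    field_simp
    ring

lemma lin_aux {g : ℝ → ℝ} {a b : ℝ} (hba : |b| ≤ |a|) (ha : 0 < |a|)
    (hodd : ∀ s, |s| ≤ |a| → g (-s) = -g s)
    (h1 : AffOn g a b) (h2 : AffOn g a (-b)) :
    ∃ c, ∀ s, |s| ≤ |a| → g s = c * s := by
  have hpa : |a| ≤ |a| := le_refl _
  have hnb : |(-b)| ≤ |a| := by rwa [abs_neg]
  have h1' := affOn_neg hodd hpa hba h1
  have h2' := affOn_neg hodd hpa hnb h2
  rw [neg_neg] at h2'
  rcases le_or_gt 0 a with haa | haa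
  · have ea : |a| = a := abs_of_nonneg haa
    rw [ea] at ha hodd hba ⊢
    rcases le_or_gt 0 b with hbb | hbb
    · have eb : |b| = b := abs_of_nonneg hbb
      rw [eb] at hba
      exact ⟨g a / a, lin_core ha hbb hba hodd h2 h2'⟩
    · have eb : |b| = -b := abs_of_neg hbb
      rw [eb] at hba
      refine ⟨g a / a, lin_core ha (by linarith) hba hodd ?_ h1'⟩
      rw [neg_neg]; exact h1
  · have ea : |a| = -a := abs_of_neg haa
    rw [ea] at ha hodd hba ⊢
    rcases le_or_gt 0 b with hbb | hbb
    · have eb : |b| = b := abs_of_nonneg hbb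
      rw [eb] at hba
      refine ⟨g (-a) / (-a), lin_core ha hbb hba hodd h1' ?_⟩
      rw [neg_neg]; exact h1
    · have eb : |b| = -b := abs_of_neg hbb
      rw [eb] at hba
      refine ⟨g (-a) / (-a), lin_core ha (by linarith) hba hodd ?_ ?_⟩
      · rw [neg_neg]; exact h2'
      · rw [neg_neg]; exact h2

lemma lin_main {g : ℝ → ℝ} {a b : ℝ} (hm : 0 < max |a| |b|)
    (hodd : ∀ s, |s| ≤ max |a| |b| → g (-s) = -g s)
    (h1 : AffOn g a b) (h2 : AffOn g a (-b)) :
    ∃ c, ∀ s, |s| ≤ max |a| |b| → g s = c * s := by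
  rcases le_total |b| |a| with h | h
  · have e : max |a| |b| = |a| := max_eq_left h
    rw [e] at hm hodd ⊢
    exact lin_aux h hm hodd h1 h2
  · have e : max |a| |b| = |b| := max_eq_right h
    rw [e] at hm hodd ⊢
    have h1s := affOn_symm h1
    have h2s := affOn_symm h2
    have h2s' := affOn_neg hodd (by rw [abs_neg]) h h2s
    rw [neg_neg] at h2s'
    exact lin_aux h hm hodd h1s h2s'

/-! ### Geometric lemmas -/

lemma projPerp_add_smul (v : E) (hv : v ≠ 0) (x : E) (c : ℝ) :
    projPerp v (x + c • v) = projPerp v x := by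
  have hvv : ⟪v, v⟫ ≠ 0 := inner_self_ne_zero.mpr hv
  unfold projPerp
  rw [inner_add_left, real_inner_smul_left]
  have e : (⟪x, v⟫ + c * ⟪v, v⟫) / ⟪v, v⟫ = ⟪x, v⟫ / ⟪v, v⟫ + c := by field_simp
  rw [e, add_smul]
  abel

lemma edge_affine {K : Set E} {v : E} (hv : v ≠ 0) {β : E → ℝ} {ε : ℝ} (hε : 0 < ε)
    (hconv : ∀ t ∈ Set.Ioo (-ε) ε, Convex ℝ (RSFamily K v β t))
    (ψ : E →ₗ[ℝ] ℝ) (hψK : ∀ z ∈ K, ψ z ≤ 1) (hψv : ψ v ≠ 0)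
    {x y : E} (hx : x ∈ K) (hy : y ∈ K) (hψx : ψ x = 1) (hψy : ψ y = 1) :
    ∀ s : ℝ, 0 ≤ s → s ≤ 1 →
      β (projPerp v (s • x + (1 - s) • y))
        = s * β (projPerp v x) + (1 - s) * β (projPerp v y) := by
  intro s h0 h1
  set mp : E := s • x + (1 - s) • y with hm
  set D : ℝ := s * β (projPerp v x) + (1 - s) * β (projPerp v y) - β (projPerp v mp)
    with hD
  have key : ∀ t ∈ Set.Ioo (-ε) ε, mp + (t * D) • v ∈ K := by
    intro t ht
    have hc := hconv t ht
    have p1 : x + (t * β (projPerp v x)) • v ∈ RSFamily K v β t := ⟨x, hx, rfl⟩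
    have p2 : y + (t * β (projPerp v y)) • v ∈ RSFamily K v β t := ⟨y, hy, rfl⟩
    have hcomb := hc p1 p2 (a := s) (b := 1 - s) h0 (by linarith) (by ring)
    obtain ⟨z, hzK, hze⟩ := hcomb
    simp only at hze
    have hrhs : s • (x + (t * β (projPerp v x)) • v)
          + (1 - s) • (y + (t * β (projPerp v y)) • v)
        = mp + (s * (t * β (projPerp v x)) + (1 - s) * (t * β (projPerp v y))) • v := by
      rw [hm]; module
    rw [hrhs] at hze
    have hπ : projPerp v z = projPerp v mp := by
      have e1 := projPerp_add_smul v hv z (t * β (projPerp v z))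
      have e2 := projPerp_add_smul v hv mp
        (s * (t * β (projPerp v x)) + (1 - s) * (t * β (projPerp v y)))
      rw [← e1, hze, e2]
    have hzeq : z = mp + (t * D) • v := by
      have e3 : z = mp + (s * (t * β (projPerp v x)) + (1 - s) * (t * β (projPerp v y))) • v
          - (t * β (projPerp v z)) • v := by
        rw [← hze]; abel
      rw [hπ] at e3
      rw [e3, hD]
      module
    rw [← hzeq]
    exact hzK
  have h_t : ε / 2 ∈ Set.Ioo (-ε) ε := by constructor <;> linarith
  have h_t' : -(ε / 2) ∈ Set.Ioo (-ε) ε := by constructor <;> linarith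
  have k1 := hψK _ (key _ h_t)
  have k2 := hψK _ (key _ h_t')
  have hψm : ψ mp = 1 := by
    rw [hm, map_add, _root_.map_smul, _root_.map_smul, hψx, hψy, smul_eq_mul, smul_eq_mul]; ring
  rw [map_add, _root_.map_smul, hψm, smul_eq_mul] at k1 k2
  have u1 : ε / 2 * (D * ψ v) ≤ 0 := by nlinarith [k1]
  have u2 : 0 ≤ ε / 2 * (D * ψ v) := by nlinarith [k2]
  have u3 : ε / 2 * (D * ψ v) = 0 := le_antisymm u1 u2
  have hu : D * ψ v = 0 :=
    (mul_eq_zero.mp u3).resolve_left (by positivity)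
  have hD0 : D = 0 := (mul_eq_zero.mp hu).resolve_right hψv
  have hD0' : s * β (projPerp v x) + (1 - s) * β (projPerp v y) - β (projPerp v mp) = 0 := by
    rw [← hD]; exact hD0
  linarith

/-! ### Euclidean plane computations -/

def V2 (x y : ℝ) : EuclideanSpace ℝ (Fin 2) := WithLp.toLp 2 ![x, y]

lemma projPerp_eq (v : EuclideanSpace ℝ (Fin 2)) (hv : v ≠ 0)
    (x : EuclideanSpace ℝ (Fin 2)) :
    projPerp v x = (⟪x, V2 (-(v 1)) (v 0)⟫ / ⟪V2 (-(v 1)) (v 0), V2 (-(v 1)) (v 0)⟫)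
      • V2 (-(v 1)) (v 0) := by
  have hv01 : v 0 ≠ 0 ∨ v 1 ≠ 0 := by
    by_contra h
    push_neg at h
    exact hv (by ext i; fin_cases i <;> simp [h.1, h.2])
  have hne : v 0 ^ 2 + v 1 ^ 2 ≠ 0 := by
    rcases hv01 with h | h
    · positivity
    · positivity
  ext i
  fin_cases i
  all_goals simp [projPerp, V2, PiLp.inner_apply, Fin.sum_univ_two, PiLp.sub_apply,
    PiLp.smul_apply, -inner_self_eq_norm_sq_to_K]
  · linear_combination (-(x 0)) * mul_inv_cancel₀ hne
  · linear_combination (-(x 1)) * mul_inv_cancel₀ hne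

/-- Every symmetric parallelogram in `ℝ²` (the image of `[-1,1]²` under an invertible
linear map) is SRS-indecomposable. -/
theorem parallelogram_not_SRSDecomposable
    (L : EuclideanSpace ℝ (Fin 2) ≃ₗ[ℝ] EuclideanSpace ℝ (Fin 2))
    (P : Set (EuclideanSpace ℝ (Fin 2)))
    (hP : P = L '' {x | ∀ i, x i ∈ Set.Icc (-1 : ℝ) 1}) :
    ¬ IsSRSDecomposable P := by
  subst hP
  rintro ⟨v, β, ε, hε, hv, hodd, hconv, hnl⟩
  apply hnl
  set C : Set (EuclideanSpace ℝ (Fin 2)) := {x | ∀ i, x i ∈ Set.Icc (-1 : ℝ) 1} with hC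
  set w : EuclideanSpace ℝ (Fin 2) := V2 (-(v 1)) (v 0) with hw
  have hwne : w ≠ 0 := by
    intro h
    apply hv
    ext i
    have h0 := congrArg (fun u => u 0) h
    have h1 := congrArg (fun u => u 1) h
    simp [hw, V2] at h0 h1
    fin_cases i <;> simp [h0, h1]
  have hQpos : (0:ℝ) < ⟪w, w⟫ := by
    rw [real_inner_self_eq_norm_sq]
    have : ‖w‖ ≠ 0 := norm_ne_zero_iff.mpr hwne
    positivity
  set Q : ℝ := ⟪w, w⟫ with hQdef
  have hQ : Q ≠ 0 := ne_of_gt hQpos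
  have hproj : ∀ x : EuclideanSpace ℝ (Fin 2), projPerp v x = (⟪x, w⟫ / Q) • w :=
    fun x => projPerp_eq v hv x
  have hvw : ⟪v, w⟫ = 0 := by
    simp [hw, V2, PiLp.inner_apply, Fin.sum_univ_two]
    ring
  set g : ℝ → ℝ := fun s => β ((s / Q) • w) with hg
  have hβg : ∀ x : EuclideanSpace ℝ (Fin 2), β (projPerp v x) = g ⟪x, w⟫ := by
    intro x
    rw [hproj x, hg]
  set α : ℝ := ⟪L (V2 1 0), w⟫ with hα
  set γ : ℝ := ⟪L (V2 0 1), w⟫ with hγ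
  have hL2 : ∀ p0 p1 : ℝ, V2 p0 p1 = p0 • V2 1 0 + p1 • V2 0 1 := by
    intro p0 p1
    ext i
    fin_cases i <;> simp [V2]
  have ipL : ∀ p0 p1 : ℝ, ⟪L (V2 p0 p1), w⟫ = p0 * α + p1 * γ := by
    intro p0 p1
    rw [hL2 p0 p1, map_add, _root_.map_smul, _root_.map_smul, inner_add_left,
      real_inner_smul_left, real_inner_smul_left]
  set m : ℝ := max |α + γ| |α - γ| with hmdef
  have habs : |α| + |γ| = m := by
    rw [hmdef]
    rcases abs_cases α with ⟨e1, s1⟩ | ⟨e1, s1⟩ <;>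
      rcases abs_cases γ with ⟨e2, s2⟩ | ⟨e2, s2⟩ <;>
      rcases abs_cases (α + γ) with ⟨e3, s3⟩ | ⟨e3, s3⟩ <;>
      rcases abs_cases (α - γ) with ⟨e4, s4⟩ | ⟨e4, s4⟩ <;>
      rcases max_cases |α + γ| |α - γ| with ⟨e5, s5⟩ | ⟨e5, s5⟩ <;>
      linarith
  have hcube : ∀ p0 p1 : ℝ, |p0| ≤ 1 → |p1| ≤ 1 → L (V2 p0 p1) ∈ L '' C := by
    intro p0 p1 h0 h1
    rw [abs_le] at h0 h1
    refine ⟨V2 p0 p1, ?_, rfl⟩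
    intro i
    fin_cases i <;> simp [V2, hC] <;> constructor <;> linarith [h0.1, h0.2, h1.1, h1.2]
  have hbound : ∀ x ∈ L '' C, |⟪x, w⟫| ≤ m := by
    rintro x ⟨p, hp, rfl⟩
    have hpe : p = V2 (p 0) (p 1) := by
      ext i
      fin_cases i <;> simp [V2]
    have hp0 := Set.mem_Icc.mp (hp 0)
    have hp1 := Set.mem_Icc.mp (hp 1)
    rw [hpe, ipL]
    calc |p 0 * α + p 1 * γ| ≤ |p 0 * α| + |p 1 * γ| := abs_add_le _ _
      _ = |p 0| * |α| + |p 1| * |γ| := by rw [abs_mul, abs_mul]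
      _ ≤ 1 * |α| + 1 * |γ| := by
          have a0 : |p 0| ≤ 1 := abs_le.mpr hp0
          have a1 : |p 1| ≤ 1 := abs_le.mpr hp1
          have := abs_nonneg α
          have := abs_nonneg γ
          nlinarith
      _ = |α| + |γ| := by ring
      _ = m := habs
  have hreal : ∀ s : ℝ, |s| ≤ m → ∃ x ∈ L '' C, ⟪x, w⟫ = s := by
    intro s hs
    rw [← habs] at hs
    rcases eq_or_lt_of_le (by positivity : (0:ℝ) ≤ |α| + |γ|) with h0 | hpos
    · have hs0 : s = 0 := by
        have := abs_nonneg s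
        have : |s| = 0 := le_antisymm (by linarith) (abs_nonneg s)
        exact abs_eq_zero.mp this
      exact ⟨L (V2 0 0), hcube 0 0 (by norm_num) (by norm_num),
        by rw [ipL, hs0]; ring⟩
    · set r : ℝ := s / (|α| + |γ|) with hr
      have hrabs : |r| ≤ 1 := by
        rw [hr, abs_div, abs_of_pos hpos, div_le_one hpos]
        exact hs
      set p0 : ℝ := if 0 ≤ α then r else -r with hp0
      set p1 : ℝ := if 0 ≤ γ then r else -r with hp1
      have hp0a : |p0| ≤ 1 := by rw [hp0]; split_ifs <;> simp [abs_neg, hrabs]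
      have hp1a : |p1| ≤ 1 := by rw [hp1]; split_ifs <;> simp [abs_neg, hrabs]
      have he0 : p0 * α = r * |α| := by
        rw [hp0]; split_ifs with h
        · rw [abs_of_nonneg h]
        · rw [abs_of_neg (not_le.mp h)]; ring
      have he1 : p1 * γ = r * |γ| := by
        rw [hp1]; split_ifs with h
        · rw [abs_of_nonneg h]
        · rw [abs_of_neg (not_le.mp h)]; ring
      refine ⟨L (V2 p0 p1), hcube p0 p1 hp0a hp1a, ?_⟩
      rw [ipL, he0, he1, ← mul_add, hr]
      field_simp
  have hm0 : 0 < m := by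
    rw [← habs]
    rcases eq_or_lt_of_le (by positivity : (0:ℝ) ≤ |α| + |γ|) with h0 | hpos
    · exfalso
      have hα0 : α = 0 := by
        have := abs_nonneg α
        have := abs_nonneg γ
        have : |α| = 0 := by linarith
        exact abs_eq_zero.mp this
      have hγ0 : γ = 0 := by
        have := abs_nonneg α
        have := abs_nonneg γ
        have : |γ| = 0 := by linarith
        exact abs_eq_zero.mp this
      have hww : ⟪w, w⟫ = 0 := by
        have hpe : L.symm w = V2 (L.symm w 0) (L.symm w 1) := by
          ext i
          fin_cases i <;> simp [V2]
        have := ipL (L.symm w 0) (L.symm w 1)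
        rw [← hpe, L.apply_symm_apply, hα0, hγ0] at this
        simpa using this
      rw [← hQdef] at hww
      exact hQ hww
    · exact hpos
  have hgodd : ∀ s, |s| ≤ m → g (-s) = -g s := by
    intro s hs
    obtain ⟨x, hxP, hxs⟩ := hreal s hs
    have h2 := hodd _ ⟨x, hxP, rfl⟩
    rw [hproj] at h2
    have e : -((⟪x, w⟫ / Q) • w) = ((-⟪x, w⟫) / Q) • w := by
      rw [neg_div, neg_smul]
    rw [e, hxs] at h2
    exact h2
  -- the two edge linear functionals
  have haux : ∀ j : Fin 2, ∀ z1 z2 : EuclideanSpace ℝ (Fin 2),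
      L.symm (z1 + z2) j = L.symm z1 j + L.symm z2 j := by
    intro j z1 z2
    rw [map_add]
    rfl
  have haux2 : ∀ j : Fin 2, ∀ (c : ℝ) (z : EuclideanSpace ℝ (Fin 2)),
      L.symm (c • z) j = c * L.symm z j := by
    intro j c z
    rw [_root_.map_smul]
    rfl
  have hψgen : ∀ j : Fin 2, ∃ ψ : EuclideanSpace ℝ (Fin 2) →ₗ[ℝ] ℝ,
      ∀ z, ψ z = L.symm z j := by
    intro j
    exact ⟨{ toFun := fun z => L.symm z j
             map_add' := haux j
             map_smul' := haux2 j }, fun z => rfl⟩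
  obtain ⟨ψ0, hψ0⟩ := hψgen 0
  obtain ⟨ψ1, hψ1⟩ := hψgen 1
  have hψcube : ∀ j : Fin 2, ∀ z ∈ L '' C, L.symm z j ∈ Set.Icc (-1:ℝ) 1 := by
    rintro j z ⟨p, hp, rfl⟩
    rw [L.symm_apply_apply]
    exact hp j
  have hψvert : ∀ (p0 p1 : ℝ) (j : Fin 2), L.symm (L (V2 p0 p1)) j = V2 p0 p1 j := by
    intro p0 p1 j
    rw [L.symm_apply_apply]
  -- affinity on the two edges
  have haff1 : AffOn g (α + γ) (α - γ) := by
    by_cases hcγ : γ = 0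
    · have e : α + γ = α - γ := by rw [hcγ]; ring
      rw [e]
      exact affOn_self g _
    · have hψv : ψ0 v ≠ 0 := by
        intro h0
        rw [hψ0] at h0
        set r : ℝ := L.symm v 1 with hrdef
        have hv2 : L.symm v = V2 0 r := by
          ext i
          fin_cases i <;> simp [V2, h0, hrdef]
        have hveq : v = L (V2 0 r) := by
          rw [← hv2, L.apply_symm_apply]
        have hip : (0:ℝ) * α + r * γ = 0 := by
          rw [← ipL, ← hveq]
          exact hvw
        have hrne : r ≠ 0 := by
          intro h
          apply hv
          rw [hveq, h]
          have : V2 0 (0:ℝ) = 0 := by ext i; fin_cases i <;> simp [V2]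
          rw [this, map_zero]
        apply hcγ
        have : r * γ = 0 := by linarith
        exact (mul_eq_zero.mp this).resolve_left hrne
      have hedge := edge_affine hv hε hconv ψ0
        (fun z hz => by rw [hψ0]; exact (hψcube 0 z hz).2) hψv
        (hcube 1 1 (by norm_num) (by norm_num))
        (hcube 1 (-1) (by norm_num) (by norm_num))
        (by rw [hψ0, hψvert]; simp [V2])
        (by rw [hψ0, hψvert]; simp [V2])
      intro s h0 h1
      have hthis := hedge s h0 h1
      rw [hβg, hβg, hβg] at hthis
      have eip : ⟪s • L (V2 1 1) + (1 - s) • L (V2 1 (-1)), w⟫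
          = s * (α + γ) + (1 - s) * (α - γ) := by
        rw [inner_add_left, real_inner_smul_left, real_inner_smul_left, ipL, ipL]
        ring
      rw [eip, ipL, ipL] at hthis
      have e1 : (1:ℝ) * α + 1 * γ = α + γ := by ring
      have e2 : (1:ℝ) * α + (-1) * γ = α - γ := by ring
      rw [e1, e2] at hthis
      exact hthis
  have haff2 : AffOn g (α + γ) (-(α - γ)) := by
    by_cases hcα : α = 0
    · have e : α + γ = -(α - γ) := by rw [hcα]; ring
      rw [e]
      exact affOn_self g _
    · have hψv : ψ1 v ≠ 0 := by
        intro h0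
        rw [hψ1] at h0
        set r : ℝ := L.symm v 0 with hrdef
        have hv2 : L.symm v = V2 r 0 := by
          ext i
          fin_cases i <;> simp [V2, h0, hrdef]
        have hveq : v = L (V2 r 0) := by
          rw [← hv2, L.apply_symm_apply]
        have hip : r * α + (0:ℝ) * γ = 0 := by
          rw [← ipL, ← hveq]
          exact hvw
        have hrne : r ≠ 0 := by
          intro h
          apply hv
          rw [hveq, h]
          have : V2 (0:ℝ) 0 = 0 := by ext i; fin_cases i <;> simp [V2]
          rw [this, map_zero]
        apply hcα
        have : r * α = 0 := by linarith
        exact (mul_eq_zero.mp this).resolve_left hrne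
      have hedge := edge_affine hv hε hconv ψ1
        (fun z hz => by rw [hψ1]; exact (hψcube 1 z hz).2) hψv
        (hcube 1 1 (by norm_num) (by norm_num))
        (hcube (-1) 1 (by norm_num) (by norm_num))
        (by rw [hψ1, hψvert]; simp [V2])
        (by rw [hψ1, hψvert]; simp [V2])
      intro s h0 h1
      have hthis := hedge s h0 h1
      rw [hβg, hβg, hβg] at hthis
      have eip : ⟪s • L (V2 1 1) + (1 - s) • L (V2 (-1) 1), w⟫
          = s * (α + γ) + (1 - s) * (-(α - γ)) := by
        rw [inner_add_left, real_inner_smul_left, real_inner_smul_left, ipL, ipL]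
        ring
      rw [eip, ipL, ipL] at hthis
      have e1 : (1:ℝ) * α + 1 * γ = α + γ := by ring
      have e2 : (-1:ℝ) * α + 1 * γ = -(α - γ) := by ring
      rw [e1, e2] at hthis
      exact hthis
  obtain ⟨c, hcf⟩ := lin_main (by rw [← hmdef]; exact hm0) (by rw [← hmdef]; exact hgodd)
    haff1 haff2
  refine ⟨{ toFun := fun z => c * ⟪w, z⟫
            map_add' := by
              intro z1 z2
              rw [inner_add_right]
              ring
            map_smul' := by
              intro r z
              rw [real_inner_smul_right]
              simp only [RingHom.id_apply, smul_eq_mul]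
              ring }, ?_⟩
  rintro y ⟨x, hxP, rfl⟩
  rw [hproj]
  have hb := hbound x hxP
  have hgc := hcf ⟪x, w⟫ (by rw [hmdef] at hb; exact hb)
  have hℓ : c * ⟪w, (⟪x, w⟫ / Q) • w⟫ = c * ⟪x, w⟫ := by
    rw [real_inner_smul_right, ← hQdef]
    field_simp
  show β ((⟪x, w⟫ / Q) • w) = c * ⟪w, (⟪x, w⟫ / Q) • w⟫
  rw [hℓ]
  exact hgc

end
end

section
/- For every n ≥ 2, every symmetric parallelotope in ℝ^n (i.e., the image of the cube [-1,1]^n under an invertible linear map) is SRS-indecomposable. -/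
open MeasureTheory Set
open scoped RealInnerProductSpace

noncomputable section

set_option maxHeartbeats 1600000

variable {E : Type*} [NormedAddCommGroup E] [InnerProductSpace ℝ E]

namespace SRSAux

variable {v : E}

lemma inner_self_ne (hv : v ≠ 0) : ⟪v, v⟫ ≠ 0 := by
  exact (inner_self_ne_zero (𝕜 := ℝ)).mpr hv

lemma projPerp_add_smul (hv : v ≠ 0) (x : E) (s : ℝ) :
    projPerp v (x + s • v) = projPerp v x := by
  have h := inner_self_ne hv
  simp only [projPerp, inner_add_left, real_inner_smul_left]
  rw [add_div, mul_div_assoc, div_self h]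
  module

lemma projPerp_neg (v x : E) : projPerp v (-x) = -projPerp v x := by
  simp only [projPerp, inner_neg_left, neg_div, neg_smul]
  module

lemma projPerp_combo (v x y : E) (a b : ℝ) :
    projPerp v (a • x + b • y) = a • projPerp v x + b • projPerp v y := by
  simp only [projPerp, inner_add_left, real_inner_smul_left, add_div, mul_div_assoc]
  module

lemma eq_add_smul_of_projPerp_eq (hv : v ≠ 0) {u p : E}
    (h : projPerp v u = projPerp v p) :
    u = p + ((⟪u, v⟫ - ⟪p, v⟫) / ⟪v, v⟫) • v := by
  have h0 := inner_self_ne hv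
  simp only [projPerp] at h
  have : u - p = (⟪u, v⟫ / ⟪v, v⟫) • v - (⟪p, v⟫ / ⟪v, v⟫) • v := by
    rw [eq_sub_iff_add_eq]
    calc u - p + (⟪p, v⟫ / ⟪v, v⟫) • v
        = (u - (⟪u, v⟫ / ⟪v, v⟫) • v) - (p - (⟪p, v⟫ / ⟪v, v⟫) • v) - p + p
            + (⟪u, v⟫ / ⟪v, v⟫) • v := by module
      _ = (⟪u, v⟫ / ⟪v, v⟫) • v := by rw [h]; module
  rw [sub_div, sub_smul] at *
  linear_combination (norm := module) this

/-- The key consequence of convexity of the RS family. -/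
lemma star {K : Set E} {β : E → ℝ} {t : ℝ} (hv : v ≠ 0)
    (hc : Convex ℝ (RSFamily K v β t))
    {x y : E} (hx : x ∈ K) (hy : y ∈ K) {θ : ℝ} (h0 : 0 ≤ θ) (h1 : θ ≤ 1) :
    θ • x + (1 - θ) • y +
      (t * (θ * β (projPerp v x) + (1 - θ) * β (projPerp v y)
        - β (projPerp v (θ • x + (1 - θ) • y)))) • v ∈ K := by
  set γ : E → ℝ := fun z => β (projPerp v z) with hγ
  have hmx : x + (t * γ x) • v ∈ RSFamily K v β t := ⟨x, hx, rfl⟩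
  have hmy : y + (t * γ y) • v ∈ RSFamily K v β t := ⟨y, hy, rfl⟩
  have hmem := hc hmx hmy h0 (show (0:ℝ) ≤ 1 - θ by linarith) (show θ + (1-θ) = 1 by ring)
  obtain ⟨u, hu, heq⟩ := hmem
  set p := θ • x + (1 - θ) • y with hp
  have hcomb : θ • (x + (t * γ x) • v) + (1 - θ) • (y + (t * γ y) • v)
      = p + (t * (θ * γ x + (1 - θ) * γ y)) • v := by
    rw [hp]; module
  rw [hcomb] at heq
  -- heq : u + (t * β (projPerp v u)) • v = p + (...) • v
  have hπ : projPerp v u = projPerp v p := by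
    have h1' : projPerp v (u + (t * γ u) • v) = projPerp v u := projPerp_add_smul hv _ _
    have h2' : projPerp v (p + (t * (θ * γ x + (1 - θ) * γ y)) • v) = projPerp v p :=
      projPerp_add_smul hv _ _
    rw [← h1', ← h2']
    exact congrArg (projPerp v) (by simpa [γ] using heq)
  have hus : u = p + ((⟪u, v⟫ - ⟪p, v⟫) / ⟪v, v⟫) • v := eq_add_smul_of_projPerp_eq hv hπ
  set s := (⟪u, v⟫ - ⟪p, v⟫) / ⟪v, v⟫ with hs
  have hγu : γ u = γ p := by
    rw [hus]
    show β (projPerp v (p + s • v)) = β (projPerp v p)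
    rw [projPerp_add_smul hv p s]
  have hveq : (s + t * γ u) • v = (t * (θ * γ x + (1 - θ) * γ y)) • v := by
    have : p + s • v + (t * γ u) • v = p + (t * (θ * γ x + (1 - θ) * γ y)) • v := by
      rw [← hus]
      simpa [γ] using heq
    have h2 : p + (s + t * γ u) • v = p + (t * (θ * γ x + (1 - θ) * γ y)) • v := by
      rw [add_smul]; rw [← add_assoc]; exact this
    exact add_left_cancel h2
  have hsc : s + t * γ u = t * (θ * γ x + (1 - θ) * γ y) := by
    have := sub_eq_zero.mpr hveq
    rw [← sub_smul] at this
    rcases smul_eq_zero.mp this with h | h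
    · linarith [sub_eq_zero.mp (by linarith [h] : s + t * γ u - t * (θ * γ x + (1 - θ) * γ y) = 0)]
    · exact absurd h hv
  have hsval : s = t * (θ * γ x + (1 - θ) * γ y - γ p) := by
    rw [hγu] at hsc; linarith [hsc]; 
  have : u = p + (t * (θ * γ x + (1 - θ) * γ y - γ p)) • v := by rw [← hsval]; exact hus
  rw [← this]; exact hu

end SRSAux

namespace SRSAux2

variable {n : ℕ}

local notation "E₀" => EuclideanSpace ℝ (Fin n)

abbrev esingle (i : Fin n) : EuclideanSpace ℝ (Fin n) := EuclideanSpace.single i (1:ℝ)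

lemma addsingle_apply (p : E₀) (s : ℝ) (i j : Fin n) :
    (p + s • esingle i) j = p j + (if j = i then s else 0) := by
  simp [EuclideanSpace.single_apply, mul_ite]

lemma coord_le_norm (x : E₀) (i : Fin n) : |x i| ≤ ‖x‖ := by
  have h := abs_real_inner_le_norm (EuclideanSpace.single i (1:ℝ)) x
  rw [EuclideanSpace.inner_single_left] at h
  simpa [EuclideanSpace.norm_single] using h

/-- Affine extension from a box: a function that preserves convex combinations on `C`,
where `C` contains a box around `w₀`, agrees on `C` with an explicit affine function. -/
lemma ext_affine (C : Set E₀) (f : EuclideanSpace ℝ (Fin n) → ℝ)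
    (w₀ : E₀) (ρ : ℝ) (hρ : 0 < ρ)
    (hbox : ∀ w : E₀, (∀ i, |w i - w₀ i| ≤ ρ) → w ∈ C)
    (haff : ∀ w ∈ C, ∀ z ∈ C, ∀ θ : ℝ, 0 ≤ θ → θ ≤ 1 →
      f (θ • w + (1-θ) • z) = θ * f w + (1-θ) * f z) :
    ∃ a : Fin n → ℝ, ∀ w ∈ C, f w = f w₀ + ∑ i, a i * (w i - w₀ i) := by
  classical
  set sl : Fin n → E₀ → ℝ :=
    fun i p => (f (p + (ρ/2) • esingle i) - f (p - (ρ/2) • esingle i)) / ρ with hsl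
  -- membership of perturbed points
  have hmem : ∀ (p : E₀) (r : ℝ), (∀ j, |p j - w₀ j| ≤ r) → r ≤ ρ → p ∈ C := by
    intro p r hp hr; exact hbox p fun j => le_trans (hp j) hr
  have hmem' : ∀ (p : E₀) (r s : ℝ) (i : Fin n), (∀ j, |p j - w₀ j| ≤ r) → |s| ≤ ρ - r →
      p + s • esingle i ∈ C := by
    intro p r s i hp hs
    refine hbox _ fun j => ?_
    rw [addsingle_apply]
    by_cases h : j = i
    · subst h
      simp only [if_pos rfl]
      calc |p j + s - w₀ j| ≤ |p j - w₀ j| + |s| := by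
            have : p j + s - w₀ j = (p j - w₀ j) + s := by ring
            rw [this]; exact abs_add_le _ _
        _ ≤ r + (ρ - r) := add_le_add (hp j) hs
        _ = ρ := by ring
    · simpa [h] using le_trans (hp j) (by linarith [abs_nonneg s] : r ≤ ρ)
  -- 1D affine formula
  have aff1 : ∀ (p : E₀) (i : Fin n), (∀ j, |p j - w₀ j| ≤ ρ/2) → ∀ s : ℝ, |s| ≤ ρ/2 →
      f (p + s • esingle i) = f p + s * sl i p := by
    intro p i hp s hs
    have hPp : p + (ρ/2) • esingle i ∈ C := hmem' p (ρ/2) (ρ/2) i hp (by rw [abs_of_nonneg] <;> linarith)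
    have hPm : p - (ρ/2) • esingle i ∈ C := by
      have : p - (ρ/2) • esingle i = p + (-(ρ/2)) • esingle i := by module
      rw [this]; exact hmem' p (ρ/2) (-(ρ/2)) i hp (by rw [abs_of_nonpos] <;> linarith)
    have key : ∀ s' : ℝ, |s'| ≤ ρ/2 →
        f (p + s' • esingle i) = ((s' + ρ/2)/ρ) * f (p + (ρ/2) • esingle i)
          + (1 - (s' + ρ/2)/ρ) * f (p - (ρ/2) • esingle i) := by
      intro s' hs'
      have h0 : (0:ℝ) ≤ (s' + ρ/2)/ρ := by
        apply div_nonneg _ (le_of_lt hρ); rw [abs_le] at hs'; linarith [hs'.1]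
      have h1 : (s' + ρ/2)/ρ ≤ 1 := by
        rw [div_le_one hρ]; rw [abs_le] at hs'; linarith [hs'.2]
      have hco : ((s' + ρ/2)/ρ) • (p + (ρ/2) • esingle i)
          + (1 - (s' + ρ/2)/ρ) • (p - (ρ/2) • esingle i) = p + s' • esingle i := by
        have hsc : ((s' + ρ/2)/ρ) * (ρ/2) - (1 - (s' + ρ/2)/ρ) * (ρ/2) = s' := by
          field_simp; ring
        calc ((s' + ρ/2)/ρ) • (p + (ρ/2) • esingle i)
              + (1 - (s' + ρ/2)/ρ) • (p - (ρ/2) • esingle i)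
            = p + (((s' + ρ/2)/ρ) * (ρ/2) - (1 - (s' + ρ/2)/ρ) * (ρ/2)) • esingle i := by
              module
          _ = p + s' • esingle i := by rw [hsc]
      rw [← hco]
      exact haff _ hPp _ hPm _ h0 h1
    have k1 := key s hs
    have k2 := key 0 (by simpa using le_of_lt (by linarith : (0:ℝ) < ρ/2))
    simp only [zero_smul, add_zero] at k2
    rw [k1, k2, hsl]
    field_simp
    ring
  -- slope constancy
  have slconst : ∀ (p : E₀) (i : Fin n), (∀ j, |p j - w₀ j| ≤ ρ/4) → sl i p = sl i w₀ := by
    intro p i hp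
    have hw₀box : ∀ j, |w₀ j - w₀ j| ≤ ρ/4 := by intro j; simp; positivity
    set m : E₀ := (1/2 : ℝ) • p + (1/2 : ℝ) • w₀ with hm
    have hmbox : ∀ j, |m j - w₀ j| ≤ ρ/4 := by
      intro j
      have : m j - w₀ j = (1/2) * (p j - w₀ j) := by
        simp [hm]; ring
      rw [this, abs_mul]
      calc |(1:ℝ)/2| * |p j - w₀ j| ≤ |(1:ℝ)/2| * (ρ/4) := by
            apply mul_le_mul_of_nonneg_left (hp j) (abs_nonneg _)
        _ ≤ ρ/4 := by rw [abs_of_nonneg] <;> linarith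
    have hpc : p ∈ C := hmem p (ρ/4) hp (by linarith)
    have hw₀c : w₀ ∈ C := hmem w₀ (ρ/4) hw₀box (by linarith)
    have hfm : f m = (f p + f w₀)/2 := by
      have := haff p hpc w₀ hw₀c (1/2) (by norm_num) (by norm_num)
      rw [hm]
      rw [show (1:ℝ) - 1/2 = 1/2 by norm_num] at this
      rw [this]; ring
    have box2 : ∀ (q : E₀), (∀ j, |q j - w₀ j| ≤ ρ/4) → ∀ j, |q j - w₀ j| ≤ ρ/2 := by
      intro q hq j; linarith [hq j]
    -- claim A : sl i m = sl i p
    have hA : sl i m = sl i p := by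
      have hp2 : p + (ρ/2) • esingle i ∈ C := hmem' p (ρ/4) (ρ/2) i hp
        (by rw [abs_of_nonneg] <;> linarith)
      have hcomb : (1/2:ℝ) • (p + (ρ/2) • esingle i) + (1/2:ℝ) • w₀ = m + (ρ/4) • esingle i := by
        rw [hm]; module
      have e1 : f (m + (ρ/4) • esingle i) = (f (p + (ρ/2) • esingle i) + f w₀)/2 := by
        have := haff _ hp2 _ hw₀c (1/2) (by norm_num) (by norm_num)
        rw [show (1:ℝ) - 1/2 = 1/2 by norm_num] at this
        rw [← hcomb]
        rw [this]; ring
      have e2 : f (m + (ρ/4) • esingle i) = f m + (ρ/4) * sl i m :=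
        aff1 m i (box2 m hmbox) (ρ/4) (by rw [abs_of_nonneg] <;> linarith)
      have e3 : f (p + (ρ/2) • esingle i) = f p + (ρ/2) * sl i p :=
        aff1 p i (box2 p hp) (ρ/2) (by rw [abs_of_nonneg] <;> linarith)
      have : f m + (ρ/4) * sl i m = (f p + (ρ/2) * sl i p + f w₀)/2 := by
        rw [← e2, e1, e3]
      rw [hfm] at this
      have h4 : (ρ/4) * sl i m = (ρ/4) * sl i p := by linarith
      exact mul_left_cancel₀ (by positivity) h4
    -- claim B : sl i m = sl i w₀
    have hB : sl i m = sl i w₀ := by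
      have hw2 : w₀ + (ρ/2) • esingle i ∈ C := hmem' w₀ (ρ/4) (ρ/2) i hw₀box
        (by rw [abs_of_nonneg] <;> linarith)
      have hcomb : (1/2:ℝ) • p + (1/2:ℝ) • (w₀ + (ρ/2) • esingle i) = m + (ρ/4) • esingle i := by
        rw [hm]; module
      have e1 : f (m + (ρ/4) • esingle i) = (f p + f (w₀ + (ρ/2) • esingle i))/2 := by
        have := haff _ hpc _ hw2 (1/2) (by norm_num) (by norm_num)
        rw [show (1:ℝ) - 1/2 = 1/2 by norm_num] at this
        rw [← hcomb, this]; ring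
      have e2 : f (m + (ρ/4) • esingle i) = f m + (ρ/4) * sl i m :=
        aff1 m i (box2 m hmbox) (ρ/4) (by rw [abs_of_nonneg] <;> linarith)
      have e3 : f (w₀ + (ρ/2) • esingle i) = f w₀ + (ρ/2) * sl i w₀ :=
        aff1 w₀ i (box2 w₀ hw₀box) (ρ/2) (by rw [abs_of_nonneg] <;> linarith)
      have : f m + (ρ/4) * sl i m = (f p + f w₀ + (ρ/2) * sl i w₀)/2 := by
        rw [← e2, e1, e3]; ring
      rw [hfm] at this
      have h4 : (ρ/4) * sl i m = (ρ/4) * sl i w₀ := by linarith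
      exact mul_left_cancel₀ (by positivity) h4
    rw [← hA, hB]
  refine ⟨fun i => sl i w₀, ?_⟩
  -- telescope on the box
  have boxcase : ∀ w : E₀, (∀ j, |w j - w₀ j| ≤ ρ/4) →
      f w = f w₀ + ∑ i, (sl i w₀) * (w i - w₀ i) := by
    intro w hw
    set pt : Finset (Fin n) → E₀ := fun T => w₀ + ∑ i ∈ T, (w i - w₀ i) • esingle i with hpt
    have coord : ∀ T (j : Fin n), pt T j = w₀ j + (if j ∈ T then w j - w₀ j else 0) := by
      intro T
      induction T using Finset.induction_on with
      | empty => intro j; simp [hpt]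
      | insert i T hiT ih =>
        intro j
        have hstep : pt (insert i T) = pt T + (w i - w₀ i) • esingle i := by
          simp only [hpt, Finset.sum_insert hiT]
          module
        rw [hstep, addsingle_apply, ih j]
        by_cases h : j = i
        · subst h
          simp [hiT]
        · simp [h, Finset.mem_insert]
    have boxpt : ∀ T (j : Fin n), |pt T j - w₀ j| ≤ ρ/4 := by
      intro T j
      rw [coord]
      by_cases h : j ∈ T
      · simpa [h] using hw j
      · simp [h]; positivity
    have fval : ∀ T : Finset (Fin n),
        f (pt T) = f w₀ + ∑ i ∈ T, (sl i w₀) * (w i - w₀ i) := by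
      intro T
      induction T using Finset.induction_on with
      | empty => simp [hpt]
      | insert i T hiT ih =>
        have hstep : pt (insert i T) = pt T + (w i - w₀ i) • esingle i := by
          simp only [hpt, Finset.sum_insert hiT]
          module
        have h1 : f (pt T + (w i - w₀ i) • esingle i) = f (pt T) + (w i - w₀ i) * sl i (pt T) :=
          aff1 (pt T) i (fun j => by linarith [boxpt T j]) _ (le_trans (hw i) (by linarith))
        rw [hstep, h1, slconst (pt T) i (boxpt T), ih, Finset.sum_insert hiT]
        ring
    have hwpt : pt Finset.univ = w := by
      ext j
      have := coord Finset.univ j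
      simpa using this
    have := fval Finset.univ
    rw [hwpt] at this
    simpa using this
  -- radial extension to all of C
  intro w hwC
  set d : ℝ := ‖w - w₀‖ with hd
  set δ : ℝ := (ρ/4)/(1 + d) with hδ
  have hd0 : 0 ≤ d := norm_nonneg _
  have h1d : (0:ℝ) < 1 + d := by linarith
  have hδ0 : 0 < δ := by positivity
  set w' : E₀ := w₀ - δ • (w - w₀) with hw'
  have hw'box : ∀ j, |w' j - w₀ j| ≤ ρ/4 := by
    intro j
    have hco : w' j - w₀ j = -(δ * ((w - w₀) j)) := by
      simp [hw']
    rw [hco, abs_neg, abs_mul, abs_of_pos hδ0]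
    have hcn : |(w - w₀) j| ≤ d := coord_le_norm _ j
    calc δ * |(w - w₀) j| ≤ δ * d := by
          exact mul_le_mul_of_nonneg_left hcn (le_of_lt hδ0)
      _ = (ρ/4) * (d / (1+d)) := by rw [hδ]; ring
      _ ≤ (ρ/4) * 1 := by
          apply mul_le_mul_of_nonneg_left _ (by positivity)
          rw [div_le_one h1d]; linarith
      _ = ρ/4 := by ring
  have hw'C : w' ∈ C := hmem w' (ρ/4) hw'box (by linarith)
  set θ : ℝ := δ/(1+δ) with hθ
  have h1δ : (0:ℝ) < 1 + δ := by linarith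
  have hθ0 : 0 < θ := by positivity
  have hθ1 : θ < 1 := by rw [hθ, div_lt_one h1δ]; linarith
  have hsc1 : θ - (1-θ)*δ = 0 := by rw [hθ]; field_simp; ring
  have hsc2 : (1-θ) + (1-θ)*δ = 1 := by rw [hθ]; field_simp; ring
  have hcombo : θ • w + (1-θ) • w' = w₀ := by
    calc θ • w + (1-θ) • (w₀ - δ • (w - w₀))
        = (θ - (1-θ)*δ) • w + ((1-θ) + (1-θ)*δ) • w₀ := by module
      _ = w₀ := by rw [hsc1, hsc2]; module
  have hfw₀ : f w₀ = θ * f w + (1-θ) * f w' := by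
    have := haff w hwC w' hw'C θ (le_of_lt hθ0) (le_of_lt (by linarith))
    rw [hcombo] at this
    exact this
  have hfw' : f w' = f w₀ - δ * ∑ i, (sl i w₀) * (w i - w₀ i) := by
    rw [boxcase w' hw'box]
    have : ∀ i, (sl i w₀) * (w' i - w₀ i) = -δ * ((sl i w₀) * (w i - w₀ i)) := by
      intro i
      have hco : w' i - w₀ i = -(δ * (w i - w₀ i)) := by
        simp [hw']
      rw [hco]; ring
    rw [Finset.sum_congr rfl (fun i _ => this i)]
    rw [← Finset.mul_sum]
    ring
  set G : ℝ := ∑ i, (sl i w₀) * (w i - w₀ i) with hG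
  have : θ * f w = θ * (f w₀ + G) := by
    have h2 : (1-θ)*δ = θ := by linarith
    calc θ * f w = f w₀ - (1-θ) * f w' := by linarith
      _ = f w₀ - (1-θ) * (f w₀ - δ * G) := by rw [hfw']
      _ = θ * f w₀ + ((1-θ)*δ) * G := by ring
      _ = θ * (f w₀ + G) := by rw [h2]; ring
  exact mul_left_cancel₀ (ne_of_gt hθ0) this


variable {n : ℕ}



def Qset (n : ℕ) : Set (EuclideanSpace ℝ (Fin n)) := {x | ∀ i, x i ∈ Set.Icc (-1 : ℝ) 1}

def sgn (v : EuclideanSpace ℝ (Fin n)) (i : Fin n) : ℝ := if 0 < v i then 1 else -1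

def rr (v : EuclideanSpace ℝ (Fin n)) (i : Fin n) : ℝ := |v i|⁻¹

def hfun (v : EuclideanSpace ℝ (Fin n)) (i : Fin n) (w : EuclideanSpace ℝ (Fin n)) : ℝ :=
  (1 - sgn v i * w i) * rr v i

def Sfin (v : EuclideanSpace ℝ (Fin n)) : Finset (Fin n) :=
  Finset.univ.filter (fun i => v i ≠ 0)

def cell (v : EuclideanSpace ℝ (Fin n)) (j : Fin n) : Set (EuclideanSpace ℝ (Fin n)) :=
  {w | w ∈ Qset n ∧ ∀ i ∈ Sfin v, hfun v j w ≤ hfun v i w}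

variable {v : EuclideanSpace ℝ (Fin n)} {i j : Fin n}

lemma mem_Sfin {i : Fin n} : i ∈ Sfin v ↔ v i ≠ 0 := by simp [Sfin]

lemma abs_sgn (i : Fin n) : |sgn v i| = 1 := by
  unfold sgn; split <;> simp

lemma sgn_sq (i : Fin n) : sgn v i * sgn v i = 1 := by
  unfold sgn; split <;> norm_num

lemma sgn_mul_self (hi : v i ≠ 0) : sgn v i * v i = |v i| := by
  unfold sgn
  rcases lt_trichotomy (v i) 0 with h | h | h
  · rw [if_neg (by linarith), abs_of_neg h]; ring
  · exact absurd h hi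
  · rw [if_pos h, abs_of_pos h]; ring

lemma rr_pos (hi : v i ≠ 0) : 0 < rr v i := by
  unfold rr; positivity

lemma rr_mul_abs (hi : v i ≠ 0) : rr v i * |v i| = 1 := by
  unfold rr
  exact inv_mul_cancel₀ (abs_ne_zero.mpr hi)

lemma v_eq_sgn_mul_abs (hi : v i ≠ 0) : v i = sgn v i * |v i| := by
  have h2 := sgn_sq (v := v) i
  have h1 := sgn_mul_self hi
  linear_combination sgn v i * h1 - v i * h2

lemma rr_mul_v (hi : v i ≠ 0) : rr v i * v i = sgn v i := by
  rw [v_eq_sgn_mul_abs hi]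
  have h := rr_mul_abs hi
  linear_combination sgn v i * h

lemma hfun_nonneg (hi : v i ≠ 0) {w : EuclideanSpace ℝ (Fin n)} (hw : w ∈ Qset n) : 0 ≤ hfun v i w := by
  have h1 : |sgn v i * w i| ≤ 1 := by
    rw [abs_mul, abs_sgn, one_mul]
    exact abs_le.mpr ⟨(hw i).1, (hw i).2⟩
  have h2 := rr_pos hi
  have := abs_le.mp h1
  unfold hfun
  nlinarith [this.2]

lemma hfun_combo (i : Fin n) (w z : EuclideanSpace ℝ (Fin n)) (θ : ℝ) :
    hfun v i (θ • w + (1-θ) • z) = θ * hfun v i w + (1-θ) * hfun v i z := by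
  unfold hfun
  have : (θ • w + (1-θ) • z) i = θ * w i + (1-θ) * z i := by simp
  rw [this]; ring

lemma Qset_combo {w z : EuclideanSpace ℝ (Fin n)} (hw : w ∈ Qset n) (hz : z ∈ Qset n) {θ : ℝ}
    (h0 : 0 ≤ θ) (h1 : θ ≤ 1) : θ • w + (1-θ) • z ∈ Qset n := by
  intro i
  have : (θ • w + (1-θ) • z) i = θ * w i + (1-θ) * z i := by simp
  rw [this]
  constructor
  · nlinarith [(hw i).1, (hz i).1]
  · nlinarith [(hw i).2, (hz i).2]

lemma Qset_neg {w : EuclideanSpace ℝ (Fin n)} (hw : w ∈ Qset n) : -w ∈ Qset n := by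
  intro i
  have hco : (-w) i = -(w i) := by simp
  rw [hco]
  have h1 := (hw i).1
  have h2 := (hw i).2
  exact ⟨by linarith, by linarith⟩

lemma cell_combo {j : Fin n} {w z : EuclideanSpace ℝ (Fin n)} (hw : w ∈ cell v j) (hz : z ∈ cell v j) {θ : ℝ}
    (h0 : 0 ≤ θ) (h1 : θ ≤ 1) : θ • w + (1-θ) • z ∈ cell v j := by
  refine ⟨Qset_combo hw.1 hz.1 h0 h1, fun i hi => ?_⟩
  rw [hfun_combo, hfun_combo]
  have := hw.2 i hi
  have := hz.2 i hi
  nlinarith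

/-- The point of the chord of `w` on the top facet `T j`. -/
def phi (v : EuclideanSpace ℝ (Fin n)) (j : Fin n) (w : EuclideanSpace ℝ (Fin n)) :
    EuclideanSpace ℝ (Fin n) := w + (hfun v j w) • v

lemma phi_apply (j i : Fin n) (w : EuclideanSpace ℝ (Fin n)) : phi v j w i = w i + hfun v j w * v i := by
  simp [phi]

lemma phi_apply_self (hj : v j ≠ 0) (w : EuclideanSpace ℝ (Fin n)) : phi v j w j = sgn v j := by
  rw [phi_apply]
  unfold hfun
  have h1 : rr v j * v j = sgn v j := rr_mul_v hj
  have h2 := sgn_sq (v := v) j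
  linear_combination (1 - sgn v j * w j) * h1 - w j * h2

lemma hfun_mul_v (hi : v i ≠ 0) (w : EuclideanSpace ℝ (Fin n)) : hfun v i w * v i = sgn v i - w i := by
  unfold hfun
  have h1 : rr v i * v i = sgn v i := rr_mul_v hi
  have h2 := sgn_sq (v := v) i
  linear_combination (1 - sgn v i * w i) * h1 - w i * h2

lemma phi_mem_Q {j : Fin n} (hj : v j ≠ 0) {w : EuclideanSpace ℝ (Fin n)} (hw : w ∈ cell v j) :
    phi v j w ∈ Qset n := by
  intro i
  rw [phi_apply]
  by_cases hi : v i ≠ 0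
  · have hh0 : 0 ≤ hfun v j w := hfun_nonneg hj hw.1
    have hhle : hfun v j w ≤ hfun v i w := hw.2 i (mem_Sfin.mpr hi)
    have hkey : hfun v i w * v i = sgn v i - w i := hfun_mul_v hi w
    have hwi := hw.1 i
    have hsg : sgn v i = 1 ∨ sgn v i = -1 := by
      unfold sgn; split
      · exact Or.inl rfl
      · exact Or.inr rfl
    rcases lt_or_gt_of_ne hi with hneg | hpos
    · -- v i < 0, sgn = -1
      have hs : sgn v i = -1 := by unfold sgn; rw [if_neg (by linarith)]
      rw [hs] at hkey
      constructor
      · nlinarith [mul_le_mul_of_nonpos_right hhle (le_of_lt hneg)]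
      · nlinarith [mul_nonpos_of_nonneg_of_nonpos hh0 (le_of_lt hneg), hwi.2]
    · -- v i > 0
      have hs : sgn v i = 1 := by unfold sgn; rw [if_pos hpos]
      rw [hs] at hkey
      constructor
      · nlinarith [mul_nonneg hh0 (le_of_lt hpos), hwi.1]
      · nlinarith [mul_le_mul_of_nonneg_right hhle (le_of_lt hpos)]
  · push_neg at hi
    simp [hi]
    exact ⟨(hw.1 i).1, (hw.1 i).2⟩

lemma phi_combo (j : Fin n) (w z : EuclideanSpace ℝ (Fin n)) (θ : ℝ) :
    phi v j (θ • w + (1-θ) • z) = θ • phi v j w + (1-θ) • phi v j z := by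
  unfold phi
  rw [hfun_combo]
  module




variable {n : ℕ} {v : EuclideanSpace ℝ (Fin n)} {i j k : Fin n}

lemma hfun_est (hi : v i ≠ 0) (w : EuclideanSpace ℝ (Fin n)) (c ρ' : ℝ)
    (hd : |w i - sgn v i * c| ≤ ρ') :
    |hfun v i w - (1 - c) * rr v i| ≤ ρ' * rr v i := by
  have h2 := sgn_sq (v := v) i
  have hr := rr_pos hi
  have key : hfun v i w - (1 - c) * rr v i
      = (-(sgn v i)) * ((w i - sgn v i * c) * rr v i) := by
    unfold hfun
    linear_combination (-(c * rr v i)) * h2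
  rw [key, abs_mul, abs_neg, abs_sgn, one_mul, abs_mul, abs_of_pos hr]
  exact mul_le_mul_of_nonneg_right hd (le_of_lt hr)

section Boxes

variable (hS : (Sfin v).Nonempty)

/-- `R`, minimal value of `rr` on `S`. -/
def RS (v : EuclideanSpace ℝ (Fin n)) (hS : (Sfin v).Nonempty) : ℝ := (Sfin v).inf' hS (rr v)
def MS (v : EuclideanSpace ℝ (Fin n)) (hS : (Sfin v).Nonempty) : ℝ := (Sfin v).sup' hS (rr v)
def tauS (v : EuclideanSpace ℝ (Fin n)) (hS : (Sfin v).Nonempty) : ℝ := RS v hS / 2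
def rhoS (v : EuclideanSpace ℝ (Fin n)) (hS : (Sfin v).Nonempty) : ℝ :=
  RS v hS / (8 * MS v hS)

lemma RS_pos : 0 < RS v hS := by
  rw [RS, Finset.lt_inf'_iff]
  exact fun i hi => rr_pos (mem_Sfin.mp hi)

lemma RS_le (hi : i ∈ Sfin v) : RS v hS ≤ rr v i := Finset.inf'_le _ hi

lemma le_MS (hi : i ∈ Sfin v) : rr v i ≤ MS v hS := Finset.le_sup' _ hi

lemma MS_pos : 0 < MS v hS := lt_of_lt_of_le (rr_pos (mem_Sfin.mp hS.choose_spec))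
  (le_MS hS hS.choose_spec)

lemma RS_le_MS : RS v hS ≤ MS v hS :=
  le_trans (RS_le hS hS.choose_spec) (le_MS hS hS.choose_spec)

lemma rhoS_pos : 0 < rhoS v hS := by
  have := RS_pos hS; have := MS_pos hS
  rw [rhoS]; positivity

lemma rhoS_mul_MS : rhoS v hS * MS v hS = RS v hS / 8 := by
  have hM := MS_pos hS
  rw [rhoS]; field_simp

lemma RS_eq : RS v hS = rhoS v hS * (8 * MS v hS) := by
  have hM := MS_pos hS
  rw [rhoS]; field_simp

lemma rhoS_le_one : rhoS v hS ≤ 1 := by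
  have hM := MS_pos hS
  have hRM := RS_le_MS hS
  have hR := RS_pos hS
  rw [rhoS, div_le_iff₀ (by positivity)]
  nlinarith

/-- Center of the box inside the cell `C j`. -/
def wcell (v : EuclideanSpace ℝ (Fin n)) (hS : (Sfin v).Nonempty) (j : Fin n) :
    EuclideanSpace ℝ (Fin n) := (sgn v j - tauS v hS * v j) • esingle j

/-- Center of the box inside `C j ∩ (-C k)`. -/
def wpair (v : EuclideanSpace ℝ (Fin n)) (hS : (Sfin v).Nonempty) (j k : Fin n) :
    EuclideanSpace ℝ (Fin n) :=
  (sgn v j - tauS v hS * v j) • esingle j + (tauS v hS * v k - sgn v k) • esingle k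

lemma wcell_apply (j i : Fin n) :
    wcell v hS j i = if i = j then sgn v j - tauS v hS * v j else 0 := by
  simp [wcell, EuclideanSpace.single_apply, mul_ite]

lemma wpair_apply (hjk : j ≠ k) (i : Fin n) :
    wpair v hS j k i = if i = j then sgn v j - tauS v hS * v j
      else if i = k then tauS v hS * v k - sgn v k else 0 := by
  rcases eq_or_ne i j with h | h
  · subst h
    simp [wpair, EuclideanSpace.single_apply, mul_ite, hjk]
  · rcases eq_or_ne i k with h' | h'
    · subst h'
      simp [wpair, EuclideanSpace.single_apply, mul_ite, h, Ne.symm hjk]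
    · simp [wpair, EuclideanSpace.single_apply, mul_ite, h, h']

-- coordinate bound for the facet coordinates
lemma coord_bound (hj : v j ≠ 0) (x : ℝ) (hx : |x - (sgn v j - tauS v hS * v j)| ≤ rhoS v hS ∨
    |x - (tauS v hS * v j - sgn v j)| ≤ rhoS v hS) : |x| ≤ 1 := by
  have hA : 0 < |v j| := abs_pos.mpr hj
  have hR := RS_pos hS
  have hM := MS_pos hS
  have hRA : RS v hS * |v j| ≤ 1 := by
    have h1 : RS v hS ≤ rr v j := RS_le hS (mem_Sfin.mpr hj)
    have h2 : rr v j * |v j| = 1 := rr_mul_abs hj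
    nlinarith
  have hMA : 1 ≤ MS v hS * |v j| := by
    have h1 : rr v j ≤ MS v hS := le_MS hS (mem_Sfin.mpr hj)
    have h2 : rr v j * |v j| = 1 := rr_mul_abs hj
    nlinarith
  have hρ := rhoS_pos hS
  have hrA : 4 * rhoS v hS ≤ tauS v hS * |v j| := by
    rw [tauS, RS_eq hS]
    nlinarith [mul_nonneg (le_of_lt hρ) (sub_nonneg.mpr hMA)]
  have hτA : tauS v hS * |v j| ≤ 1/2 := by rw [tauS]; nlinarith
  have habs : |sgn v j - tauS v hS * v j| = 1 - tauS v hS * |v j| := by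
    have hveq := v_eq_sgn_mul_abs hj
    have h1 : sgn v j - tauS v hS * v j = sgn v j * (1 - tauS v hS * |v j|) := by
      linear_combination (-(tauS v hS)) * hveq
    rw [h1, abs_mul, abs_sgn, one_mul]
    rw [abs_of_nonneg (by nlinarith : (0:ℝ) ≤ 1 - tauS v hS * |v j|)]
  rcases hx with hx | hx
  · have h3 := abs_sub_abs_le_abs_sub x (sgn v j - tauS v hS * v j)
    rw [habs] at h3
    linarith
  · have habs' : |tauS v hS * v j - sgn v j| = 1 - tauS v hS * |v j| := by
      rw [show tauS v hS * v j - sgn v j = -(sgn v j - tauS v hS * v j) by ring, abs_neg]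
      exact habs
    have h3 := abs_sub_abs_le_abs_sub x (tauS v hS * v j - sgn v j)
    rw [habs'] at h3
    linarith

end Boxes



section Boxes2

variable {n : ℕ} {v : EuclideanSpace ℝ (Fin n)} {i j k : Fin n} (hS : (Sfin v).Nonempty)

lemma est_zero (hj : v j ≠ 0) (w : EuclideanSpace ℝ (Fin n))
    (hwj : |w j| ≤ rhoS v hS) : |hfun v j w - rr v j| ≤ RS v hS / 8 := by
  have h := hfun_est hj w 0 (rhoS v hS) (by simpa using hwj)
  rw [sub_zero, one_mul] at h
  have h2 : rhoS v hS * rr v j ≤ RS v hS / 8 := by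
    rw [← rhoS_mul_MS hS]
    exact mul_le_mul_of_nonneg_left (le_MS hS (mem_Sfin.mpr hj)) (le_of_lt (rhoS_pos hS))
  linarith

lemma est_top (hj : v j ≠ 0) (w : EuclideanSpace ℝ (Fin n))
    (hwj : |w j - (sgn v j - tauS v hS * v j)| ≤ rhoS v hS) :
    |hfun v j w - tauS v hS| ≤ RS v hS / 8 := by
  have hveq := v_eq_sgn_mul_abs hj
  have hc : sgn v j * (1 - tauS v hS * |v j|) = sgn v j - tauS v hS * v j := by
    linear_combination tauS v hS * hveq
  have h := hfun_est hj w (1 - tauS v hS * |v j|) (rhoS v hS) (by rw [hc]; exact hwj)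
  have hrm : rr v j * |v j| = 1 := rr_mul_abs hj
  have hc2 : (1 - (1 - tauS v hS * |v j|)) * rr v j = tauS v hS := by
    linear_combination tauS v hS * hrm
  rw [hc2] at h
  have h2 : rhoS v hS * rr v j ≤ RS v hS / 8 := by
    rw [← rhoS_mul_MS hS]
    exact mul_le_mul_of_nonneg_left (le_MS hS (mem_Sfin.mpr hj)) (le_of_lt (rhoS_pos hS))
  linarith

lemma est_bot (hj : v j ≠ 0) (w : EuclideanSpace ℝ (Fin n))
    (hwj : |w j - (tauS v hS * v j - sgn v j)| ≤ rhoS v hS) :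
    |hfun v j w - (2 * rr v j - tauS v hS)| ≤ RS v hS / 8 := by
  have hveq := v_eq_sgn_mul_abs hj
  have hc : sgn v j * (-(1 - tauS v hS * |v j|)) = tauS v hS * v j - sgn v j := by
    linear_combination (-(tauS v hS)) * hveq
  have h := hfun_est hj w (-(1 - tauS v hS * |v j|)) (rhoS v hS) (by rw [hc]; exact hwj)
  have hrm : rr v j * |v j| = 1 := rr_mul_abs hj
  have hc2 : (1 - -(1 - tauS v hS * |v j|)) * rr v j = 2 * rr v j - tauS v hS := by
    linear_combination (-(tauS v hS)) * hrm
  rw [hc2] at h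
  have h2 : rhoS v hS * rr v j ≤ RS v hS / 8 := by
    rw [← rhoS_mul_MS hS]
    exact mul_le_mul_of_nonneg_left (le_MS hS (mem_Sfin.mpr hj)) (le_of_lt (rhoS_pos hS))
  linarith

lemma box_in_cell (hj : v j ≠ 0) (w : EuclideanSpace ℝ (Fin n))
    (hw : ∀ i, |w i - wcell v hS j i| ≤ rhoS v hS) : w ∈ cell v j := by
  have hρ := rhoS_pos hS
  have hρ1 := rhoS_le_one hS
  have hR := RS_pos hS
  have hQ : w ∈ Qset n := by
    intro i
    rw [Set.mem_Icc, ← abs_le]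
    rcases eq_or_ne i j with h | h
    · subst h
      refine coord_bound hS hj (w i) (Or.inl ?_)
      have := hw i
      rwa [wcell_apply, if_pos rfl] at this
    · have := hw i
      rw [wcell_apply, if_neg h] at this
      rw [sub_zero] at this
      linarith
  refine ⟨hQ, fun i hi => ?_⟩
  have hvi := mem_Sfin.mp hi
  rcases eq_or_ne i j with h | h
  · subst h; exact le_refl _
  · have h1 : |hfun v j w - tauS v hS| ≤ RS v hS / 8 := by
      refine est_top hS hj w ?_
      have := hw j
      rwa [wcell_apply, if_pos rfl] at this
    have h2 : |hfun v i w - rr v i| ≤ RS v hS / 8 := by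
      refine est_zero hS hvi w ?_
      have := hw i
      rwa [wcell_apply, if_neg h, sub_zero] at this
    have h3 : RS v hS ≤ rr v i := RS_le hS hi
    have h4 := abs_le.mp h1
    have h5 := abs_le.mp h2
    rw [tauS] at h4
    linarith [h4.2, h5.1]

lemma box_in_pair (hj : v j ≠ 0) (hk : v k ≠ 0) (hjk : j ≠ k) (w : EuclideanSpace ℝ (Fin n))
    (hw : ∀ i, |w i - wpair v hS j k i| ≤ rhoS v hS) :
    w ∈ cell v j ∧ -w ∈ cell v k := by
  have hρ := rhoS_pos hS
  have hρ1 := rhoS_le_one hS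
  have hR := RS_pos hS
  have hwj : |w j - (sgn v j - tauS v hS * v j)| ≤ rhoS v hS := by
    have := hw j
    rwa [wpair_apply hS hjk, if_pos rfl] at this
  have hwk : |w k - (tauS v hS * v k - sgn v k)| ≤ rhoS v hS := by
    have := hw k
    rwa [wpair_apply hS hjk, if_neg (Ne.symm hjk), if_pos rfl] at this
  have hwo : ∀ i, i ≠ j → i ≠ k → |w i| ≤ rhoS v hS := by
    intro i h1 h2
    have := hw i
    rwa [wpair_apply hS hjk, if_neg h1, if_neg h2, sub_zero] at this
  have hQ : w ∈ Qset n := by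
    intro i
    rw [Set.mem_Icc, ← abs_le]
    rcases eq_or_ne i j with h | h
    · subst h; exact coord_bound hS hj (w i) (Or.inl hwj)
    · rcases eq_or_ne i k with h' | h'
      · subst h'; exact coord_bound hS hk (w i) (Or.inr hwk)
      · linarith [hwo i h h']
  -- estimates
  have hTj := est_top hS hj w hwj
  have hBk := est_bot hS hk w hwk
  have hO : ∀ i, v i ≠ 0 → i ≠ j → i ≠ k → |hfun v i w - rr v i| ≤ RS v hS / 8 :=
    fun i hvi h1 h2 => est_zero hS hvi w (hwo i h1 h2)
  -- estimates for -w
  have hwj' : |(-w) j - (tauS v hS * v j - sgn v j)| ≤ rhoS v hS := by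
    have : (-w) j - (tauS v hS * v j - sgn v j) = -(w j - (sgn v j - tauS v hS * v j)) := by
      simp; ring
    rw [this, abs_neg]; exact hwj
  have hwk' : |(-w) k - (sgn v k - tauS v hS * v k)| ≤ rhoS v hS := by
    have : (-w) k - (sgn v k - tauS v hS * v k) = -(w k - (tauS v hS * v k - sgn v k)) := by
      simp; ring
    rw [this, abs_neg]; exact hwk
  have hwo' : ∀ i, i ≠ j → i ≠ k → |(-w) i| ≤ rhoS v hS := by
    intro i h1 h2
    have : |(-w) i| = |w i| := by simp
    rw [this]; exact hwo i h1 h2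
  have hTk' := est_top hS hk (-w) hwk'
  have hBj' := est_bot hS hj (-w) hwj'
  have hO' : ∀ i, v i ≠ 0 → i ≠ j → i ≠ k → |hfun v i (-w) - rr v i| ≤ RS v hS / 8 :=
    fun i hvi h1 h2 => est_zero hS hvi (-w) (hwo' i h1 h2)
  constructor
  · refine ⟨hQ, fun i hi => ?_⟩
    have hvi := mem_Sfin.mp hi
    have h3 : RS v hS ≤ rr v i := RS_le hS hi
    have h4 := abs_le.mp hTj
    rcases eq_or_ne i j with h | h
    · subst h; exact le_refl _
    · rcases eq_or_ne i k with h' | h'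
      · subst h'
        have h5 := abs_le.mp hBk
        rw [tauS] at h4 h5
        linarith [h4.2, h5.1]
      · have h5 := abs_le.mp (hO i hvi h h')
        rw [tauS] at h4
        linarith [h4.2, h5.1]
  · refine ⟨Qset_neg hQ, fun i hi => ?_⟩
    have hvi := mem_Sfin.mp hi
    have h3 : RS v hS ≤ rr v i := RS_le hS hi
    have h3' : RS v hS ≤ rr v j := RS_le hS (mem_Sfin.mpr hj)
    have h4 := abs_le.mp hTk'
    rcases eq_or_ne i k with h | h
    · subst h; exact le_refl _
    · rcases eq_or_ne i j with h' | h'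
      · subst h'
        have h5 := abs_le.mp hBj'
        rw [tauS] at h4 h5
        linarith [h4.2, h5.1]
      · have h5 := abs_le.mp (hO' i hvi h' h)
        rw [tauS] at h4
        linarith [h4.2, h5.1]

end Boxes2


section Core

variable {n : ℕ}

lemma hfun_zero {v : EuclideanSpace ℝ (Fin n)} (i : Fin n) : hfun v i 0 = rr v i := by
  unfold hfun
  simp

theorem cube_core (v : EuclideanSpace ℝ (Fin n)) (hv : v ≠ 0)
    (γ : EuclideanSpace ℝ (Fin n) → ℝ) (ε : ℝ) (hε : 0 < ε)
    (Hinv : ∀ (x : EuclideanSpace ℝ (Fin n)) (s : ℝ), γ (x + s • v) = γ x)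
    (Hodd : ∀ x ∈ Qset n, γ (-x) = -γ x)
    (HF3 : ∀ x ∈ Qset n, ∀ y ∈ Qset n, ∀ θ : ℝ, 0 ≤ θ → θ ≤ 1 → ∀ t : ℝ, -ε < t → t < ε →
      θ • x + (1-θ) • y
        + (t * (θ * γ x + (1-θ) * γ y - γ (θ • x + (1-θ) • y))) • v ∈ Qset n) :
    ∃ a : Fin n → ℝ, (∑ i, a i * v i = 0) ∧ ∀ w ∈ Qset n, γ w = ∑ i, a i * w i := by
  classical
  -- `S` is nonempty
  have hS : (Sfin v).Nonempty := by
    by_contra h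
    rw [Finset.not_nonempty_iff_eq_empty] at h
    apply hv
    ext i
    by_contra hvi
    have : i ∈ Sfin v := mem_Sfin.mpr (by simpa using hvi)
    rw [h] at this
    exact absurd this (Finset.notMem_empty i)
  -- facet affinity
  have haffFacet : ∀ j, v j ≠ 0 → ∀ x ∈ Qset n, ∀ y ∈ Qset n, x j = sgn v j → y j = sgn v j →
      ∀ θ : ℝ, 0 ≤ θ → θ ≤ 1 → γ (θ • x + (1-θ) • y) = θ * γ x + (1-θ) * γ y := by
    intro j hj x hx y hy hxj hyj θ h0 h1
    set p := θ • x + (1-θ) • y with hp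
    set δ := θ * γ x + (1-θ) * γ y - γ p with hδ
    have hpj : p j = sgn v j := by
      have : p j = θ * x j + (1-θ) * y j := by simp [hp]
      rw [this, hxj, hyj]; ring
    have hcoord : ∀ c : ℝ, (p + c • v) j = sgn v j + c * v j := by
      intro c
      have : (p + c • v) j = p j + c * v j := by simp
      rw [this, hpj]
    have hm1 := HF3 x hx y hy θ h0 h1 (ε/2) (by linarith) (by linarith)
    have hm2 := HF3 x hx y hy θ h0 h1 (-(ε/2)) (by linarith) (by linarith)
    have hb1 := (hm1 j)
    have hb2 := (hm2 j)
    rw [Set.mem_Icc] at hb1 hb2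
    rw [show θ • x + (1-θ) • y = p from rfl] at hb1 hb2
    rw [show θ * γ x + (1-θ) * γ y - γ p = δ from rfl] at hb1 hb2
    rw [hcoord] at hb1 hb2
    have hA0 : ε/2 * δ * v j = 0 := by
      have hsg : sgn v j = 1 ∨ sgn v j = -1 := by
        unfold sgn; split
        · exact Or.inl rfl
        · exact Or.inr rfl
      rcases hsg with h | h <;> rw [h] at hb1 hb2 <;> nlinarith [hb1.1, hb1.2, hb2.1, hb2.2]
    have hδ0 : δ = 0 := by
      by_contra hne
      exact (mul_ne_zero (mul_ne_zero (by linarith) hne) hj) hA0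
    rw [hδ] at hδ0
    linarith
  -- cell affinity
  have haffCell : ∀ j, v j ≠ 0 → ∀ w ∈ cell v j, ∀ z ∈ cell v j, ∀ θ : ℝ, 0 ≤ θ → θ ≤ 1 →
      γ (θ • w + (1-θ) • z) = θ * γ w + (1-θ) * γ z := by
    intro j hj w hw z hz θ h0 h1
    have hcomb : θ • w + (1-θ) • z ∈ cell v j := cell_combo hw hz h0 h1
    have e1 : γ (θ • w + (1-θ) • z) = γ (phi v j (θ • w + (1-θ) • z)) :=
      (Hinv (θ • w + (1-θ) • z) (hfun v j (θ • w + (1-θ) • z))).symm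
    have e2 : phi v j (θ • w + (1-θ) • z) = θ • phi v j w + (1-θ) • phi v j z :=
      phi_combo j w z θ
    have e3 : γ (θ • phi v j w + (1-θ) • phi v j z)
        = θ * γ (phi v j w) + (1-θ) * γ (phi v j z) :=
      haffFacet j hj (phi v j w) (phi_mem_Q hj hw) (phi v j z) (phi_mem_Q hj hz)
        (phi_apply_self hj w) (phi_apply_self hj z) θ h0 h1
    have e4 : γ (phi v j w) = γ w := Hinv w (hfun v j w)
    have e5 : γ (phi v j z) = γ z := Hinv z (hfun v j z)
    rw [e1, e2, e3, e4, e5]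
  -- affine representatives on cells
  have Hrep : ∀ j : Fin n, ∃ (A : Fin n → ℝ) (KK : ℝ), v j ≠ 0 →
      ∀ w ∈ cell v j, γ w = KK + ∑ i, A i * w i := by
    intro j
    by_cases hj : v j ≠ 0
    · obtain ⟨a, ha⟩ := ext_affine (cell v j) γ (wcell v hS j) (rhoS v hS) (rhoS_pos hS)
        (fun w hw => box_in_cell hS hj w hw)
        (fun w hw z hz θ h0 h1 => haffCell j hj w hw z hz θ h0 h1)
      refine ⟨a, γ (wcell v hS j) - ∑ i, a i * (wcell v hS j) i, fun _ w hw => ?_⟩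
      rw [ha w hw]
      have hsplit : ∑ i, a i * (w i - wcell v hS j i)
          = (∑ i, a i * w i) - ∑ i, a i * (wcell v hS j) i := by
        rw [← Finset.sum_sub_distrib]
        exact Finset.sum_congr rfl fun i _ => by ring
      rw [hsplit]; ring
    · exact ⟨0, 0, fun h => absurd h hj⟩
  choose A K hAK using Hrep
  -- pair relations
  have hpair : ∀ j k, v j ≠ 0 → v k ≠ 0 → j ≠ k → (∀ i, A j i = A k i) ∧ K j = -K k := by
    intro j k hj hk hjk
    set c := wpair v hS j k with hc
    have hbox : ∀ w : EuclideanSpace ℝ (Fin n), (∀ i, |w i - c i| ≤ rhoS v hS) →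
        (K j + K k) + ∑ i, (A j i - A k i) * w i = 0 := by
      intro w hwb
      obtain ⟨hwj, hwk⟩ := box_in_pair hS hj hk hjk w hwb
      have e1 : γ w = K j + ∑ i, A j i * w i := hAK j hj w hwj
      have e2 : γ (-w) = K k + ∑ i, A k i * (-w) i := hAK k hk (-w) hwk
      have e3 : γ (-w) = - γ w := Hodd w hwj.1
      have e4 : ∑ i, A k i * (-w) i = -∑ i, A k i * w i := by
        rw [← Finset.sum_neg_distrib]
        exact Finset.sum_congr rfl fun i _ => by
          have : (-w) i = -(w i) := by simp
          rw [this]; ring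
      have e5 : ∑ i, (A j i - A k i) * w i
          = (∑ i, A j i * w i) - ∑ i, A k i * w i := by
        rw [← Finset.sum_sub_distrib]
        exact Finset.sum_congr rfl fun i _ => by ring
      rw [e4] at e2
      rw [e5]
      linarith
    have hρ := rhoS_pos hS
    have h0 := hbox c (fun i => by simp [le_of_lt hρ])
    have hAeq : ∀ i₀, A j i₀ = A k i₀ := by
      intro i₀
      have hb : ∀ i, |(c + rhoS v hS • esingle i₀) i - c i| ≤ rhoS v hS := by
        intro i
        rw [addsingle_apply]
        rcases eq_or_ne i i₀ with h | h
        · rw [if_pos h]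
          simp [abs_of_pos hρ, le_of_lt, le_refl]
        · rw [if_neg h]; simp [le_of_lt hρ]
      have h1 := hbox (c + rhoS v hS • esingle i₀) hb
      have hsum : ∑ i, (A j i - A k i) * (c + rhoS v hS • esingle i₀) i
          = (∑ i, (A j i - A k i) * c i) + (A j i₀ - A k i₀) * rhoS v hS := by
        have e6 : ∀ i, (A j i - A k i) * (c + rhoS v hS • esingle i₀) i
            = (A j i - A k i) * c i
              + (if i = i₀ then (A j i - A k i) * rhoS v hS else 0) := by
          intro i
          rw [addsingle_apply]
          rcases eq_or_ne i i₀ with h | h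
          · rw [if_pos h, if_pos h]; ring
          · rw [if_neg h, if_neg h]; ring
        rw [Finset.sum_congr rfl fun i _ => e6 i, Finset.sum_add_distrib,
          Finset.sum_ite_eq' Finset.univ i₀ (fun i => (A j i - A k i) * rhoS v hS),
          if_pos (Finset.mem_univ i₀)]
      rw [hsum] at h1
      have : (A j i₀ - A k i₀) * rhoS v hS = 0 := by linarith
      rcases mul_eq_zero.mp this with h | h
      · linarith
      · exact absurd h (ne_of_gt hρ)
    refine ⟨hAeq, ?_⟩
    have hz : ∑ i, (A j i - A k i) * c i = 0 :=
      Finset.sum_eq_zero fun i _ => by rw [hAeq i]; ring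
    rw [hz] at h0
    linarith
  -- the special index j₀
  obtain ⟨j₀, hj₀S, hj₀min⟩ := Finset.exists_min_image (Sfin v) (rr v) hS
  have hj₀ : v j₀ ≠ 0 := mem_Sfin.mp hj₀S
  have h0Q : (0 : EuclideanSpace ℝ (Fin n)) ∈ Qset n := by
    intro i
    have : (0 : EuclideanSpace ℝ (Fin n)) i = 0 := rfl
    rw [this]
    constructor <;> norm_num
  have h0cell : (0 : EuclideanSpace ℝ (Fin n)) ∈ cell v j₀ := by
    refine ⟨h0Q, fun i hi => ?_⟩
    rw [hfun_zero, hfun_zero]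
    exact hj₀min i hi
  have hγ0 : γ 0 = 0 := by
    have := Hodd 0 h0Q
    rw [neg_zero] at this
    linarith
  have hK0 : K j₀ = 0 := by
    have h := hAK j₀ hj₀ 0 h0cell
    have hz : ∑ i, A j₀ i * (0 : EuclideanSpace ℝ (Fin n)) i = 0 :=
      Finset.sum_eq_zero fun i _ => by
        have h0' : (0 : EuclideanSpace ℝ (Fin n)) i = 0 := rfl
        rw [h0', mul_zero]
    rw [hz, hγ0] at h
    linarith
  have hall : ∀ j, v j ≠ 0 → K j = 0 ∧ ∀ i, A j i = A j₀ i := by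
    intro j hj
    rcases eq_or_ne j j₀ with rfl | hne
    · exact ⟨hK0, fun i => rfl⟩
    · obtain ⟨h1, h2⟩ := hpair j j₀ hj hj₀ hne
      exact ⟨by rw [h2, hK0, neg_zero], h1⟩
  have hmain : ∀ w ∈ Qset n, γ w = ∑ i, A j₀ i * w i := by
    intro w hw
    obtain ⟨j, hjS, hjmin⟩ := Finset.exists_min_image (Sfin v) (fun i => hfun v i w) hS
    have hj := mem_Sfin.mp hjS
    have hwc : w ∈ cell v j := ⟨hw, hjmin⟩
    have h := hAK j hj w hwc
    rw [(hall j hj).1] at h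
    rw [h, zero_add]
    exact Finset.sum_congr rfl fun i _ => by rw [(hall j hj).2 i]
  refine ⟨A j₀, ?_, hmain⟩
  -- ∑ a i * v i = 0
  have hR := RS_pos hS
  have hRv : (RS v hS) • v ∈ Qset n := by
    intro i
    have hco : ((RS v hS) • v) i = RS v hS * v i := by simp
    rw [hco, Set.mem_Icc, ← abs_le]
    by_cases hvi : v i = 0
    · rw [hvi, mul_zero, abs_zero]; norm_num
    · have h1 : RS v hS ≤ rr v i := RS_le hS (mem_Sfin.mpr hvi)
      have h2 : rr v i * |v i| = 1 := rr_mul_abs hvi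
      have h3 : 0 < |v i| := abs_pos.mpr hvi
      rw [abs_mul, abs_of_pos hR]
      nlinarith
  have h1 : γ ((RS v hS) • v) = 0 := by
    have h := Hinv 0 (RS v hS)
    rw [zero_add] at h
    rw [h, hγ0]
  have h2 := hmain _ hRv
  rw [h1] at h2
  have h3 : ∑ i, A j₀ i * ((RS v hS) • v) i = RS v hS * ∑ i, A j₀ i * v i := by
    rw [Finset.mul_sum]
    exact Finset.sum_congr rfl fun i _ => by
      have hco : ((RS v hS) • v) i = RS v hS * v i := by simp
      rw [hco]; ring
  rw [h3] at h2
  rcases mul_eq_zero.mp h2.symm with h | h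
  · exact absurd h (ne_of_gt hR)
  · exact h

end Core

end SRSAux2


/-- For every `n ≥ 2`, every symmetric parallelotope in `ℝⁿ` (the image of the cube
`[-1,1]ⁿ` under an invertible linear map) is SRS-indecomposable. -/
theorem parallelotope_not_SRSDecomposable
    {n : ℕ} (hn : 2 ≤ n)
    (L : EuclideanSpace ℝ (Fin n) ≃ₗ[ℝ] EuclideanSpace ℝ (Fin n))
    (P : Set (EuclideanSpace ℝ (Fin n)))
    (hP : P = L '' {x | ∀ i, x i ∈ Set.Icc (-1 : ℝ) 1}) :
    ¬ IsSRSDecomposable P := by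
  rintro ⟨v, β, ε, hε, hv, hodd, hconv, hnotlin⟩
  classical
  have hPmem : ∀ z : EuclideanSpace ℝ (Fin n), z ∈ P ↔ L.symm z ∈ SRSAux2.Qset n := by
    intro z
    rw [hP]
    constructor
    · rintro ⟨w, hw, rfl⟩
      rw [L.symm_apply_apply]
      exact hw
    · intro h
      exact ⟨L.symm z, h, L.apply_symm_apply z⟩
  set vL : EuclideanSpace ℝ (Fin n) := L.symm v with hvLdef
  have hvL : vL ≠ 0 := by
    intro h
    apply hv
    have := congrArg L h
    rwa [L.apply_symm_apply, map_zero] at this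
  set γL : EuclideanSpace ℝ (Fin n) → ℝ := fun w => β (projPerp v (L w)) with hγLdef
  have Hinv : ∀ (w : EuclideanSpace ℝ (Fin n)) (s : ℝ), γL (w + s • vL) = γL w := by
    intro w s
    show β (projPerp v (L (w + s • vL))) = β (projPerp v (L w))
    rw [map_add, _root_.map_smul, hvLdef, L.apply_symm_apply]
    rw [SRSAux.projPerp_add_smul hv (L w) s]
  have Hodd : ∀ w ∈ SRSAux2.Qset n, γL (-w) = -γL w := by
    intro w hw
    show β (projPerp v (L (-w))) = -β (projPerp v (L w))
    rw [map_neg, SRSAux.projPerp_neg]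
    apply hodd
    exact ⟨L w, (hPmem (L w)).mpr (by rwa [L.symm_apply_apply]), rfl⟩
  have HF3 : ∀ x ∈ SRSAux2.Qset n, ∀ y ∈ SRSAux2.Qset n, ∀ θ : ℝ, 0 ≤ θ → θ ≤ 1 →
      ∀ t : ℝ, -ε < t → t < ε →
      θ • x + (1-θ) • y
        + (t * (θ * γL x + (1-θ) * γL y - γL (θ • x + (1-θ) • y))) • vL ∈ SRSAux2.Qset n := by
    intro x hx y hy θ h0 h1 t ht1 ht2
    have hPx : L x ∈ P := (hPmem (L x)).mpr (by rwa [L.symm_apply_apply])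
    have hPy : L y ∈ P := (hPmem (L y)).mpr (by rwa [L.symm_apply_apply])
    have hcvx : Convex ℝ (RSFamily P v β t) := hconv t ⟨ht1, ht2⟩
    have hstar := SRSAux.star hv hcvx hPx hPy h0 h1
    have hLcomb : θ • L x + (1-θ) • L y = L (θ • x + (1-θ) • y) := by
      rw [map_add, _root_.map_smul, _root_.map_smul]
    rw [hLcomb] at hstar
    have hmem := (hPmem _).mp hstar
    rw [map_add, _root_.map_smul, L.symm_apply_apply] at hmem
    exact hmem
  obtain ⟨a, hav, ha⟩ := SRSAux2.cube_core vL hvL γL ε hε Hinv Hodd HF3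
  apply hnotlin
  refine ⟨LinearMap.comp
    { toFun := fun u => ∑ i, a i * u i
      map_add' := by
        intro u₁ u₂
        have hco : ∀ i, (u₁ + u₂) i = u₁ i + u₂ i := fun i => rfl
        rw [← Finset.sum_add_distrib]
        exact Finset.sum_congr rfl fun i _ => by rw [hco i]; ring
      map_smul' := by
        intro c u
        have hco : ∀ i, (c • u) i = c * u i := fun i => rfl
        simp only [RingHom.id_apply, smul_eq_mul]
        rw [Finset.mul_sum]
        exact Finset.sum_congr rfl fun i _ => by rw [hco i]; ring }
    (L.symm : EuclideanSpace ℝ (Fin n) ≃ₗ[ℝ] EuclideanSpace ℝ (Fin n)).toLinearMap, ?_⟩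
  intro x hx
  obtain ⟨y, hyP, hyx⟩ := hx
  have hw : L.symm y ∈ SRSAux2.Qset n := (hPmem y).mp hyP
  have h1 : β x = γL (L.symm y) := by
    rw [← hyx]
    show β (projPerp v y) = β (projPerp v (L (L.symm y)))
    rw [L.apply_symm_apply]
  have h2 : γL (L.symm y) = ∑ i, a i * (L.symm y) i := ha _ hw
  have h4 : L.symm x = L.symm y - (⟪y, v⟫/⟪v, v⟫) • vL := by
    rw [← hyx]
    show L.symm (y - (⟪y, v⟫ / ⟪v, v⟫) • v) = _
    rw [map_sub, _root_.map_smul, hvLdef]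
  have h5 : ∑ i, a i * (L.symm x) i
      = (∑ i, a i * (L.symm y) i) - (⟪y, v⟫/⟪v, v⟫) * ∑ i, a i * vL i := by
    rw [h4, Finset.mul_sum, ← Finset.sum_sub_distrib]
    refine Finset.sum_congr rfl fun i _ => ?_
    have hco : (L.symm y - (⟪y, v⟫/⟪v, v⟫) • vL) i = (L.symm y) i - (⟪y, v⟫/⟪v, v⟫) * vL i :=
      rfl
    rw [hco]; ring
  show β x = ∑ i, a i * (L.symm x) i
  rw [h5, hav, mul_zero, sub_zero, h1, h2]
end
end

section
/- Let K ⊂ ℝ² be a symmetric convex body and N ≥ 2 an integer. Let x₁, …, x_{N+1} be independent random points uniformly distributed in K and let Π_{N+1} = conv{±x₁, …, ±x_{N+1}} be their symmetric convex hull. Then the expected number of vertices (extreme points) of Π_{N+1} equals 2(N+1)(1 − 𝔼 V_{K,N}). -/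
open MeasureTheory Set

noncomputable section

variable {E : Type*} [NormedAddCommGroup E] [InnerProductSpace ℝ E]

/-- A symmetric convex body: a compact convex set with nonempty interior with `K = -K`. -/
def IsSymConvexBody (K : Set E) : Prop :=
  IsCompact K ∧ Convex ℝ K ∧ (interior K).Nonempty ∧ K = -K

/-- `momentU n N K p = 𝔼 U_{K,N}^p`, the `p`-th moment of the normalized volume of the
convex hull of `N` independent uniform random points in `K ⊆ ℝⁿ`. -/
def momentU (n N : ℕ) (K : Set (EuclideanSpace ℝ (Fin n))) (p : ℝ) : ℝ :=
  (∫ x : Fin N → EuclideanSpace ℝ (Fin n) in {x | ∀ i, x i ∈ K},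
      ((volume (convexHull ℝ (Set.range x))).toReal / (volume K).toReal) ^ p) /
    (volume K).toReal ^ N

/-- `momentV n N K p = 𝔼 V_{K,N}^p`, the `p`-th moment of the normalized volume of the
symmetric convex hull `conv{±x₁, …, ±x_N}` of `N` independent uniform random points
in `K ⊆ ℝⁿ`. -/
def momentV (n N : ℕ) (K : Set (EuclideanSpace ℝ (Fin n))) (p : ℝ) : ℝ :=
  (∫ x : Fin N → EuclideanSpace ℝ (Fin n) in {x | ∀ i, x i ∈ K},
      ((volume (convexHull ℝ (Set.range x ∪ -Set.range x))).toReal / (volume K).toReal) ^ p) /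
    (volume K).toReal ^ N

section AuxLemmas

open scoped Classical

set_option maxHeartbeats 1000000

variable {F : Type*} [NormedAddCommGroup F] [NormedSpace ℝ F]

/-- Adding `-a` to a set whose hull contains `0` does not affect whether `a` is in the hull. -/
lemma mem_convexHull_insert_neg_iff {B : Set F} {a : F} (hB : B.Nonempty)
    (h0 : (0 : F) ∈ convexHull ℝ B) :
    a ∈ convexHull ℝ (insert (-a) B) ↔ a ∈ convexHull ℝ B := by
  constructor
  · intro h
    rw [convexHull_insert hB] at h
    simp only [mem_convexJoin, mem_singleton_iff] at h
    obtain ⟨_, rfl, y, hy, u, v, hu, hv, huv, hseg⟩ := h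
    have hkey : (1 + u) • a = v • y := by
      linear_combination (norm := module) -hseg
    have h1u : (0:ℝ) < 1 + u := by linarith
    have ha : a = ((1 + u)⁻¹ * v) • y := by
      rw [← smul_smul, ← hkey, inv_smul_smul₀ (ne_of_gt h1u)]
    have hc0 : 0 ≤ (1 + u)⁻¹ * v := by positivity
    have hc1 : (1 + u)⁻¹ * v ≤ 1 := by
      rw [inv_mul_le_iff₀ h1u]; linarith
    have := (convex_convexHull ℝ B) hy h0 hc0 (by linarith : (0:ℝ) ≤ 1 - (1 + u)⁻¹ * v)
      (by ring)
    simpa [← ha] using this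
  · intro h
    exact convexHull_mono (subset_insert _ _) h

/-- For `a ∈ A`, `a` is an extreme point of the hull of `A` iff it is outside the hull
of `A \ {a}`. -/
lemma mem_extremePoints_convexHull_iff {A : Set F} {a : F} (haA : a ∈ A)
    (hne : (A \ {a}).Nonempty) :
    a ∈ (convexHull ℝ A).extremePoints ℝ ↔ a ∉ convexHull ℝ (A \ {a}) := by
  constructor
  · intro h hmem
    rw [(convex_convexHull ℝ A).mem_extremePoints_iff_mem_diff_convexHull_diff] at h
    exact h.2 (convexHull_mono (diff_subset_diff_left (subset_convexHull ℝ A)) hmem)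
  · intro hnot
    rw [mem_extremePoints_iff_forall_segment]
    refine ⟨subset_convexHull ℝ A haA, fun x₁ h₁ x₂ h₂ hseg => ?_⟩
    have hA : convexHull ℝ A = convexHull ℝ (insert a (A \ {a})) := by
      rw [insert_diff_singleton, insert_eq_self.2 haA]
    rw [hA, convexHull_insert hne] at h₁ h₂
    simp only [mem_convexJoin, mem_singleton_iff] at h₁ h₂
    obtain ⟨z₁, hz₁, y₁, hy₁, u₁, v₁, hu₁, hv₁, huv₁, hx₁⟩ := h₁
    obtain ⟨z₂, hz₂, y₂, hy₂, u₂, v₂, hu₂, hv₂, huv₂, hx₂⟩ := h₂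
    rw [hz₁] at hx₁
    rw [hz₂] at hx₂
    obtain ⟨s, t, hs, ht, hst, hsum⟩ := hseg
    have h1 : s • (u₁ • a + v₁ • y₁) + t • (u₂ • a + v₂ • y₂) = a := by
      rw [hx₁, hx₂]; exact hsum
    have hco : 1 - (s * u₁ + t * u₂) = s * v₁ + t * v₂ := by nlinarith
    have hkey : (s * v₁ + t * v₂) • a = (s * v₁) • y₁ + (t * v₂) • y₂ := by
      rw [← hco]
      linear_combination (norm := module) -h1
    by_cases hd : s * v₁ + t * v₂ = 0
    · have hsv : s * v₁ = 0 := by nlinarith [mul_nonneg hs hv₁, mul_nonneg ht hv₂]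
      have htv : t * v₂ = 0 := by nlinarith [mul_nonneg hs hv₁, mul_nonneg ht hv₂]
      by_cases hs0 : s = 0
      · right
        have ht1 : t = 1 := by linarith
        rw [hs0, ht1] at hsum
        simpa using hsum
      · left
        have hv10 : v₁ = 0 := by
          rcases mul_eq_zero.1 hsv with h | h
          · exact absurd h hs0
          · exact h
        have hu11 : u₁ = 1 := by linarith
        rw [hu11, hv10] at hx₁
        simpa using hx₁.symm
    · exfalso
      have hdpos : 0 < s * v₁ + t * v₂ := lt_of_le_of_ne
        (by positivity) (Ne.symm hd)
      have ha : a = ((s * v₁) / (s * v₁ + t * v₂)) • y₁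
          + ((t * v₂) / (s * v₁ + t * v₂)) • y₂ := by
        have h3 : (s * v₁ + t * v₂)⁻¹ • ((s * v₁ + t * v₂) • a)
            = (s * v₁ + t * v₂)⁻¹ • ((s * v₁) • y₁ + (t * v₂) • y₂) := by rw [hkey]
        rw [inv_smul_smul₀ hd] at h3
        rw [h3, smul_add, smul_smul, smul_smul, div_eq_inv_mul, div_eq_inv_mul]
      have hmem : (s * v₁ / (s * v₁ + t * v₂)) • y₁
          + (t * v₂ / (s * v₁ + t * v₂)) • y₂ ∈ convexHull ℝ (A \ {a}) := by
        refine (convex_convexHull ℝ _) hy₁ hy₂ ?_ ?_ ?_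
        · positivity
        · positivity
        · rw [← add_div, div_self hd]
      rw [← ha] at hmem
      exact hnot hmem

lemma neg_mem_convexHull_symm_iff {B : Set F} (hB : -B = B) {a : F} :
    -a ∈ convexHull ℝ B ↔ a ∈ convexHull ℝ B := by
  constructor
  · intro h
    have : -(-a) ∈ -convexHull ℝ B := Set.neg_mem_neg.2 h
    rw [neg_neg, ← convexHull_neg, hB] at this
    exact this
  · intro h
    have : -a ∈ -convexHull ℝ B := Set.neg_mem_neg.2 h
    rw [← convexHull_neg, hB] at this
    exact this

lemma convexHull_range_eq_image_stdSimplex {ι : Type*} [Fintype ι] (v : ι → F) :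
    convexHull ℝ (range v) = (fun w : ι → ℝ => ∑ i, w i • v i) '' stdSimplex ℝ ι := by
  apply Subset.antisymm
  · apply convexHull_min
    · rintro _ ⟨i, rfl⟩
      classical
      refine ⟨fun j => if j = i then 1 else 0, ⟨fun j => by positivity, by simp⟩, ?_⟩
      simp [ite_smul]
    · have hL : (fun w : ι → ℝ => ∑ i, w i • v i) =
          ⇑({ toFun := fun w : ι → ℝ => ∑ i, w i • v i,
              map_add' := fun w w' => by simp [add_smul, Finset.sum_add_distrib],
              map_smul' := fun c w => by simp [smul_smul, Finset.smul_sum] } : (ι → ℝ) →ₗ[ℝ] F) :=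
        rfl
      rw [hL]
      exact (convex_stdSimplex ℝ ι).linear_image _
  · rintro _ ⟨w, hw, rfl⟩
    exact (convex_convexHull ℝ _).sum_mem (fun i _ => hw.1 i) hw.2
      (fun i _ => subset_convexHull ℝ _ (mem_range_self i))

lemma isClosed_hull_pair {ι : Type*} [Fintype ι] :
    IsClosed {p : F × (ι → F) | p.1 ∈ convexHull ℝ (range p.2)} := by
  have key : {p : F × (ι → F) | p.1 ∈ convexHull ℝ (range p.2)}
      = Prod.snd '' {q : (stdSimplex ℝ ι) × (F × (ι → F)) |
          ∑ i, (q.1 : ι → ℝ) i • q.2.2 i = q.2.1} := by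
    ext p
    constructor
    · intro h
      rw [mem_setOf_eq, convexHull_range_eq_image_stdSimplex] at h
      obtain ⟨w, hw, hsum⟩ := h
      exact ⟨⟨⟨w, hw⟩, p⟩, hsum, rfl⟩
    · rintro ⟨⟨w, q⟩, hq, rfl⟩
      rw [mem_setOf_eq, convexHull_range_eq_image_stdSimplex]
      exact ⟨w.1, w.2, hq⟩
  rw [key]
  haveI : CompactSpace (stdSimplex ℝ ι) := isCompact_iff_compactSpace.mp (isCompact_stdSimplex ℝ ι)
  apply isClosedMap_snd_of_compactSpace
  apply isClosed_eq
  · apply continuous_finset_sum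
    intro i _
    exact ((continuous_apply i).comp (continuous_subtype_val.comp continuous_fst)).smul
      ((continuous_apply i).comp (continuous_snd.comp continuous_snd))
  · exact continuous_fst.comp continuous_snd

lemma ncard_extremePoints_eq {n : ℕ} (hn : 2 ≤ n) (x : Fin n → F)
    (hinj : Function.Injective x) (hneg : ∀ i j, x i ≠ -x j) :
    ((extremePoints ℝ (convexHull ℝ (range x ∪ -range x))).ncard : ℝ)
      = ∑ i, (if x i ∈ convexHull ℝ ((x '' {i}ᶜ) ∪ -(x '' {i}ᶜ)) then (0:ℝ) else 2) := by
  classical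
  haveI : Nontrivial (Fin n) := Fin.nontrivial_iff_two_le.mpr hn
  set A := range x ∪ -range x with hA
  set B := fun i : Fin n => (x '' {i}ᶜ) ∪ -(x '' {i}ᶜ) with hB
  have hxA : ∀ i, x i ∈ A := fun i => Or.inl (mem_range_self i)
  have hnxA : ∀ i, -x i ∈ A := fun i => Or.inr (Set.neg_mem_neg.2 (mem_range_self i))
  have hmemB : ∀ i j, j ≠ i → x j ∈ B i := fun i j hj => Or.inl ⟨j, hj, rfl⟩
  have hmemB' : ∀ i j, j ≠ i → -x j ∈ B i :=
    fun i j hj => Or.inr (Set.neg_mem_neg.2 ⟨j, hj, rfl⟩)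
  have hBne : ∀ i, (B i).Nonempty := by
    intro i
    obtain ⟨j, hj⟩ := exists_ne i
    exact ⟨x j, hmemB i j hj⟩
  have hBsymm : ∀ i, -(B i) = B i := by
    intro i
    ext b
    rw [Set.mem_neg]
    simp only [hB, mem_union, Set.mem_neg, neg_neg]
    exact or_comm
  have h0B : ∀ i, (0 : F) ∈ convexHull ℝ (B i) := by
    intro i
    obtain ⟨j, hj⟩ := exists_ne i
    have heq : (1/2 : ℝ) • x j + (1/2 : ℝ) • (-x j) = 0 := by module
    have := (convex_convexHull ℝ (B i)) (subset_convexHull ℝ _ (hmemB i j hj))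
      (subset_convexHull ℝ _ (hmemB' i j hj)) (by norm_num : (0:ℝ) ≤ 1/2)
      (by norm_num : (0:ℝ) ≤ 1/2) (by norm_num)
    rwa [heq] at this
  have hAdiff : ∀ i, A \ {x i} = insert (-x i) (B i) := by
    intro i
    ext b
    simp only [hA, hB, mem_diff, mem_union, mem_insert_iff, mem_singleton_iff, Set.mem_neg,
      mem_range, mem_image, mem_compl_iff]
    constructor
    · rintro ⟨hb | hb, hbne⟩
      · obtain ⟨j, rfl⟩ := hb
        refine Or.inr (Or.inl ⟨j, fun h => hbne (by rw [h]), rfl⟩)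
      · obtain ⟨j, hj⟩ := hb
        by_cases hji : j = i
        · subst hji
          left
          rw [hj, neg_neg]
        · refine Or.inr (Or.inr ⟨j, hji, hj⟩)
    · rintro (rfl | ⟨j, hji, rfl⟩ | ⟨j, hji, hj⟩)
      · refine ⟨Or.inr ⟨i, by simp⟩, fun h => hneg i i ?_⟩
        rw [← h, neg_neg]
        exact h
      · exact ⟨Or.inl ⟨j, rfl⟩, fun h => hji (hinj h)⟩
      · constructor
        · exact Or.inr ⟨j, hj⟩
        · intro h
          rw [h] at hj
          exact hneg j i hj
  have hAdiff' : ∀ i, A \ {-x i} = insert (x i) (B i) := by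
    intro i
    ext b
    simp only [hA, hB, mem_diff, mem_union, mem_insert_iff, mem_singleton_iff, Set.mem_neg,
      mem_range, mem_image, mem_compl_iff]
    constructor
    · rintro ⟨hb | hb, hbne⟩
      · obtain ⟨j, rfl⟩ := hb
        by_cases hji : j = i
        · subst hji; exact Or.inl rfl
        · exact Or.inr (Or.inl ⟨j, hji, rfl⟩)
      · obtain ⟨j, hj⟩ := hb
        have hji : j ≠ i := by
          intro h
          subst h
          exact hbne (by rw [hj, neg_neg])
        exact Or.inr (Or.inr ⟨j, hji, hj⟩)
    · rintro (rfl | ⟨j, hji, rfl⟩ | ⟨j, hji, hj⟩)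
      · exact ⟨Or.inl ⟨i, rfl⟩, fun h => hneg i i h⟩
      · refine ⟨Or.inl ⟨j, rfl⟩, fun h => hneg j i h⟩
      · constructor
        · exact Or.inr ⟨j, hj⟩
        · intro h
          rw [h, neg_neg] at hj
          exact hji (hinj hj)
  have hext : ∀ i, (x i ∈ (convexHull ℝ A).extremePoints ℝ ↔ x i ∉ convexHull ℝ (B i)) := by
    intro i
    rw [mem_extremePoints_convexHull_iff (hxA i)
      ⟨-x i, (hAdiff i).symm ▸ mem_insert (-x i) (B i)⟩]
    rw [hAdiff i, mem_convexHull_insert_neg_iff (hBne i) (h0B i)]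
  have hnext : ∀ i, (-x i ∈ (convexHull ℝ A).extremePoints ℝ ↔ x i ∉ convexHull ℝ (B i)) := by
    intro i
    rw [mem_extremePoints_convexHull_iff (hnxA i)
      ⟨x i, (hAdiff' i).symm ▸ mem_insert (x i) (B i)⟩]
    rw [hAdiff' i]
    have h1 : insert (x i) (B i) = insert (-(-x i)) (B i) := by rw [neg_neg]
    rw [h1, mem_convexHull_insert_neg_iff (hBne i) (h0B i),
      neg_mem_convexHull_symm_iff (hBsymm i)]
  set I : Set (Fin n) := {i | x i ∉ convexHull ℝ (B i)} with hI
  have hset : (convexHull ℝ A).extremePoints ℝ = x '' I ∪ (fun i => -x i) '' I := by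
    ext b
    constructor
    · intro hb
      have hbA : b ∈ A := extremePoints_convexHull_subset hb
      rcases hbA with ⟨j, rfl⟩ | hb2
      · exact Or.inl ⟨j, (hext j).1 hb, rfl⟩
      · rw [Set.mem_neg] at hb2
        obtain ⟨j, hj⟩ := hb2
        have hbj : b = -x j := by rw [hj, neg_neg]
        subst hbj
        exact Or.inr ⟨j, (hnext j).1 hb, rfl⟩
    · rintro (⟨j, hj, rfl⟩ | ⟨j, hj, rfl⟩)
      · exact (hext j).2 hj
      · exact (hnext j).2 hj
  have hIfin : I.Finite := Set.toFinite I
  have hdisj : Disjoint (x '' I) ((fun i => -x i) '' I) := by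
    rw [Set.disjoint_left]
    rintro b ⟨j, _, rfl⟩ ⟨k, _, hk⟩
    exact hneg j k (by rw [← hk])
  rw [hset, Set.ncard_union_eq hdisj (hIfin.image x) (hIfin.image _),
    Set.ncard_image_of_injective _ hinj,
    Set.ncard_image_of_injective _ (fun a b h => hinj (neg_injective h))]
  have hIcard : I.ncard = (Finset.univ.filter (fun i => x i ∉ convexHull ℝ (B i))).card := by
    rw [← Set.ncard_coe_finset]
    congr 1
    ext i
    simp [hI]
  rw [Finset.sum_ite, Finset.sum_const, Finset.sum_const, hIcard]
  simp only [smul_zero, nsmul_eq_mul, zero_add]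
  push_cast
  ring

lemma range_pm {ι : Type*} (y : ι → F) :
    range (Sum.elim y (fun k => -y k)) = range y ∪ -range y := by
  rw [Set.Sum.elim_range]
  congr 1
  ext b
  simp only [mem_range, Set.mem_neg]
  constructor
  · rintro ⟨k, rfl⟩; exact ⟨k, by rw [neg_neg]⟩
  · rintro ⟨k, hk⟩; exact ⟨k, by rw [hk, neg_neg]⟩

lemma isClosed_symmHull_pair {ι : Type*} [Fintype ι] :
    IsClosed {p : F × (ι → F) | p.1 ∈ convexHull ℝ (range p.2 ∪ -range p.2)} := by
  have h : {p : F × (ι → F) | p.1 ∈ convexHull ℝ (range p.2 ∪ -range p.2)}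
      = (fun p : F × (ι → F) => (p.1, Sum.elim p.2 (fun k => -p.2 k))) ⁻¹'
        {q : F × ((ι ⊕ ι) → F) | q.1 ∈ convexHull ℝ (range q.2)} := by
    ext p
    simp only [mem_setOf_eq, mem_preimage, range_pm]
  rw [h]
  apply IsClosed.preimage _ isClosed_hull_pair
  refine continuous_fst.prodMk (continuous_pi fun k => ?_)
  cases k with
  | inl k => exact (continuous_apply k).comp continuous_snd
  | inr k => exact ((continuous_apply k).comp continuous_snd).neg

abbrev E2 := EuclideanSpace ℝ (Fin 2)

lemma measurable_symmHullVol {m : ℕ} :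
    Measurable fun y : Fin m → E2 =>
      (volume (convexHull ℝ (range y ∪ -range y))).toReal := by
  have hW : MeasurableSet {q : (Fin m → E2) × E2 |
      q.2 ∈ convexHull ℝ (range q.1 ∪ -range q.1)} := by
    have hcl : IsClosed {q : (Fin m → E2) × E2 |
        q.2 ∈ convexHull ℝ (range q.1 ∪ -range q.1)} := by
      have h : {q : (Fin m → E2) × E2 | q.2 ∈ convexHull ℝ (range q.1 ∪ -range q.1)}
          = (fun q : (Fin m → E2) × E2 => (q.2, q.1)) ⁻¹'
            {p : E2 × (Fin m → E2) | p.1 ∈ convexHull ℝ (range p.2 ∪ -range p.2)} := rfl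
      rw [h]
      exact isClosed_symmHull_pair.preimage (continuous_snd.prodMk continuous_fst)
    exact hcl.measurableSet
  have := measurable_measure_prodMk_left (ν := (volume : Measure E2)) hW
  exact this.ennreal_toReal

lemma image_compl_eq_range_succAbove {m : ℕ} (x : Fin (m+1) → E2) (i : Fin (m+1)) :
    x '' {i}ᶜ = range (fun k : Fin m => x (i.succAbove k)) := by
  have h : (fun k : Fin m => x (i.succAbove k)) = x ∘ i.succAbove := rfl
  rw [h, Set.range_comp, Fin.range_succAbove]

lemma measurableSet_Ci {m : ℕ} (i : Fin (m+1)) :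
    MeasurableSet {x : Fin (m+1) → E2 |
      x i ∈ convexHull ℝ ((x '' {i}ᶜ) ∪ -(x '' {i}ᶜ))} := by
  have h : {x : Fin (m+1) → E2 | x i ∈ convexHull ℝ ((x '' {i}ᶜ) ∪ -(x '' {i}ᶜ))}
      = (fun x : Fin (m+1) → E2 => (x i, fun k : Fin m => x (i.succAbove k))) ⁻¹'
        {p : E2 × (Fin m → E2) | p.1 ∈ convexHull ℝ (range p.2 ∪ -range p.2)} := by
    ext x
    simp only [mem_setOf_eq, mem_preimage, image_compl_eq_range_succAbove]
  rw [h]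
  have hcont : Continuous (fun x : Fin (m+1) → E2 =>
      ((x i, fun k : Fin m => x (i.succAbove k)) : E2 × (Fin m → E2))) :=
    (continuous_apply i).prodMk (continuous_pi fun k => continuous_apply _)
  have hcl : IsClosed ((fun x : Fin (m+1) → E2 => (x i, fun k : Fin m => x (i.succAbove k))) ⁻¹'
        {p : E2 × (Fin m → E2) | p.1 ∈ convexHull ℝ (range p.2 ∪ -range p.2)}) :=
    IsClosed.preimage hcont isClosed_symmHull_pair
  exact hcl.measurableSet

lemma pi_null_of_pair {μ : Measure E2} [IsFiniteMeasure μ] {m : ℕ}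
    (i j : Fin (m+1)) (hij : j ≠ i) {f : E2 → E2} (hf : Continuous f)
    (hf0 : ∀ a, μ (f ⁻¹' {a}) = 0) :
    Measure.pi (fun _ : Fin (m+1) => μ) {x | f (x j) = x i} = 0 := by
  obtain ⟨k, hk⟩ := Fin.exists_succAbove_eq hij
  set e := MeasurableEquiv.piFinSuccAbove (fun _ : Fin (m+1) => E2) i with he
  have hmp := measurePreserving_piFinSuccAbove (fun _ : Fin (m+1) => μ) i
  set s : Set (E2 × (Fin m → E2)) := {q | f (q.2 k) = q.1} with hs
  have hcont : Continuous fun q : E2 × (Fin m → E2) => f (q.2 k) :=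
    hf.comp ((continuous_apply k).comp continuous_snd)
  have hsm : MeasurableSet s := (isClosed_eq hcont continuous_fst).measurableSet
  have hset : {x : Fin (m+1) → E2 | f (x j) = x i} = e ⁻¹' s := by
    ext x
    simp only [mem_setOf_eq, mem_preimage]
    have hcomp : (e x).2 k = x j := by rw [← hk]; rfl
    have hcomp1 : (e x).1 = x i := rfl
    constructor
    · intro hx
      show f ((e x).2 k) = (e x).1
      rw [hcomp, hcomp1]
      exact hx
    · intro hx
      have hx' : f ((e x).2 k) = (e x).1 := hx
      rwa [hcomp, hcomp1] at hx'
  rw [hset, hmp.measure_preimage hsm.nullMeasurableSet,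
    Measure.measure_prod_null hsm]
  refine Filter.Eventually.of_forall fun a => ?_
  have hsub : (Prod.mk a ⁻¹' s) ⊆ Function.eval k ⁻¹' (f ⁻¹' {a}) := by
    intro y hy
    exact hy
  exact measure_mono_null hsub (Measure.pi_eval_preimage_null _ (hf0 a))

lemma ae_good (μ : Measure E2) [IsFiniteMeasure μ] [NullSingletonClass μ] (m : ℕ) :
    ∀ᵐ x : Fin (m+1) → E2 ∂Measure.pi (fun _ => μ),
      Function.Injective x ∧ ∀ i j, x i ≠ -x j := by
  have key1 : ∀ (i j : Fin (m+1)), j ≠ i → ∀ᵐ x : Fin (m+1) → E2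
      ∂Measure.pi (fun _ => μ), x j ≠ x i := by
    intro i j hij
    rw [ae_iff]
    have h0 := pi_null_of_pair (μ := μ) i j hij continuous_id (fun a => measure_singleton a)
    simpa using h0
  have key2 : ∀ (i j : Fin (m+1)), ∀ᵐ x : Fin (m+1) → E2
      ∂Measure.pi (fun _ => μ), x i ≠ -x j := by
    intro i j
    by_cases hij : j = i
    · subst hij
      have h0 : Measure.pi (fun _ : Fin (m+1) => μ) {x | x j = 0} = 0 :=
        Measure.pi_hyperplane _ j 0
      rw [ae_iff]
      refine measure_mono_null ?_ h0
      intro x hx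
      simp only [mem_setOf_eq, not_not] at hx ⊢
      have h2 : (2:ℝ) • x j = 0 := by
        rw [two_smul]
        nth_rewrite 2 [hx]
        exact add_neg_cancel _
      simpa using (smul_eq_zero.1 h2).resolve_left (by norm_num)
    · have h0 := pi_null_of_pair (μ := μ) i j hij continuous_neg
        (fun a => by
          have : (Neg.neg ⁻¹' {a} : Set E2) = {-a} := by
            ext b; simp [neg_eq_iff_eq_neg]
          rw [this]; exact measure_singleton _)
      rw [ae_iff]
      refine measure_mono_null ?_ h0
      intro x hx
      simp only [mem_setOf_eq, not_not] at hx ⊢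
      rw [hx]
  have hae1 : ∀ᵐ x : Fin (m+1) → E2 ∂Measure.pi (fun _ => μ),
      ∀ i j, j ≠ i → x j ≠ x i := by
    rw [ae_all_iff]
    intro i
    rw [ae_all_iff]
    intro j
    by_cases hij : j = i
    · subst hij
      exact Filter.Eventually.of_forall fun x h => absurd rfl h
    · filter_upwards [key1 i j hij] with x hx
      exact fun _ => hx
  have hae2 : ∀ᵐ x : Fin (m+1) → E2 ∂Measure.pi (fun _ => μ),
      ∀ i j, x i ≠ -x j := by
    rw [ae_all_iff]
    intro i
    rw [ae_all_iff]
    intro j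
    exact key2 i j
  filter_upwards [hae1, hae2] with x h1 h2
  refine ⟨fun a b hab => ?_, h2⟩
  by_contra hne
  exact h1 b a hne hab

lemma measurableSet_W {m : ℕ} : MeasurableSet
    {q : E2 × (Fin m → E2) | q.1 ∈ convexHull ℝ (range q.2 ∪ -range q.2)} := by
  haveI hop : OpensMeasurableSpace (E2 × (Fin m → E2)) := by infer_instance
  have hcl : IsClosed {q : E2 × (Fin m → E2) |
      q.1 ∈ convexHull ℝ (range q.2 ∪ -range q.2)} := isClosed_symmHull_pair
  exact hcl.measurableSet

lemma restrict_pi_eq (K : Set E2) (hKm : MeasurableSet K) (m : ℕ) :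
    (volume : Measure (Fin m → E2)).restrict {x | ∀ i, x i ∈ K}
      = Measure.pi (fun _ : Fin m => volume.restrict K) := by
  have hset : {x : Fin m → E2 | ∀ i, x i ∈ K} = Set.pi univ (fun _ => K) := by
    ext x; simp [Set.mem_pi]
  rw [hset]
  refine (Measure.pi_eq fun s hs => ?_).symm
  rw [volume_pi, Measure.restrict_apply (MeasurableSet.pi countable_univ (fun i _ => hs i)),
    ← Set.pi_inter_distrib, Measure.pi_pi]
  exact Finset.prod_congr rfl fun i _ => (Measure.restrict_apply (hs i)).symm

/-- Let `K ⊆ ℝ²` be a symmetric convex body and `N ≥ 2`.  If `Π_{N+1}` denotes the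
symmetric convex hull `conv{±x₁, …, ±x_{N+1}}` of `N + 1` independent uniform random
points in `K`, then the expected number of vertices (extreme points) of `Π_{N+1}` is
`2(N+1)(1 − 𝔼 V_{K,N})`. -/

theorem expected_vertices_symmetric_random_polygon
    (K : Set (EuclideanSpace ℝ (Fin 2))) (hK : IsSymConvexBody K)
    (N : ℕ) (hN : 2 ≤ N) :
    (∫ x : Fin (N + 1) → EuclideanSpace ℝ (Fin 2) in {x | ∀ i, x i ∈ K},
        ((Set.extremePoints ℝ (convexHull ℝ (Set.range x ∪ -Set.range x))).ncard : ℝ)) /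
      (volume K).toReal ^ (N + 1) =
    2 * (N + 1) * (1 - momentV 2 N K 1) := by
  obtain ⟨hKcomp, hKconv, hKint, hKsymm⟩ :=
    (hK : IsCompact K ∧ Convex ℝ K ∧ (interior K).Nonempty ∧ K = -K)
  have hKm : MeasurableSet K := hKcomp.isClosed.measurableSet
  have hKfin : volume K ≠ ⊤ := hKcomp.measure_lt_top.ne
  have hc_pos : 0 < (volume K).toReal :=
    ENNReal.toReal_pos (Measure.measure_pos_of_nonempty_interior _ hKint).ne' hKfin
  set μ : Measure E2 := volume.restrict K with hμ
  haveI : IsFiniteMeasure μ := by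
    constructor
    rw [hμ, Measure.restrict_apply_univ]
    exact hKcomp.measure_lt_top
  set M1 : Measure (Fin (N+1) → E2) := Measure.pi (fun _ => μ) with hM1
  set M0 : Measure (Fin N → E2) := Measure.pi (fun _ => μ) with hM0
  haveI : IsFiniteMeasure M1 := by rw [hM1]; infer_instance
  haveI : IsFiniteMeasure M0 := by rw [hM0]; infer_instance
  -- hull of points in K is in K
  have hsubK : ∀ {m : ℕ} (y : Fin m → E2), (∀ j, y j ∈ K) →
      convexHull ℝ (range y ∪ -range y) ⊆ K := by
    intro m y hy
    apply convexHull_min _ hKconv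
    apply union_subset
    · exact range_subset_iff.2 hy
    · intro b hb
      rw [Set.mem_neg] at hb
      obtain ⟨j, hj⟩ := hb
      have hbK : -b ∈ K := hj ▸ hy j
      rw [hKsymm, Set.mem_neg]
      exact hbK
  have haeK : ∀ᵐ y ∂M0, ∀ j, y j ∈ K := by
    rw [ae_all_iff]
    intro j
    rw [ae_iff]
    have h0 : μ Kᶜ = 0 := by
      rw [hμ, Measure.restrict_apply hKm.compl]
      simp
    have hnull : Measure.pi (fun _ : Fin N => μ) (Function.eval j ⁻¹' Kᶜ) = 0 :=
      Measure.pi_eval_preimage_null _ h0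
    rw [hM0]
    exact measure_mono_null (fun y hy => hy) hnull
  set J : ℝ := ∫ y, (volume (convexHull ℝ (range y ∪ -range y))).toReal ∂M0 with hJ
  have hIntVol : Integrable
      (fun y : Fin N → E2 => (volume (convexHull ℝ (range y ∪ -range y))).toReal) M0 := by
    refine Integrable.mono' (integrable_const (volume K).toReal)
      measurable_symmHullVol.aestronglyMeasurable ?_
    filter_upwards [haeK] with y hy
    rw [Real.norm_of_nonneg ENNReal.toReal_nonneg]
    exact ENNReal.toReal_mono hKfin (measure_mono (hsubK y hy))
  -- the numerator
  rw [restrict_pi_eq K hKm (N+1)]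
  have hae_cnt : ∀ᵐ x ∂M1, ((Set.extremePoints ℝ
        (convexHull ℝ (Set.range x ∪ -Set.range x))).ncard : ℝ)
      = ∑ i, (if x i ∈ convexHull ℝ ((x '' {i}ᶜ) ∪ -(x '' {i}ᶜ)) then (0:ℝ) else 2) := by
    filter_upwards [ae_good μ N] with x hx
    exact ncard_extremePoints_eq (by omega) x hx.1 hx.2
  have hInt : ∀ i : Fin (N+1), Integrable (fun x : Fin (N+1) → E2 =>
      if x i ∈ convexHull ℝ ((x '' {i}ᶜ) ∪ -(x '' {i}ᶜ)) then (0:ℝ) else 2) M1 := by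
    intro i
    have hform : (fun x : Fin (N+1) → E2 =>
        if x i ∈ convexHull ℝ ((x '' {i}ᶜ) ∪ -(x '' {i}ᶜ)) then (0:ℝ) else 2)
        = Set.indicator ({x : Fin (N+1) → E2 |
            x i ∈ convexHull ℝ ((x '' {i}ᶜ) ∪ -(x '' {i}ᶜ))}ᶜ) (fun _ => (2:ℝ)) := by
      funext x
      by_cases hx : x i ∈ convexHull ℝ ((x '' {i}ᶜ) ∪ -(x '' {i}ᶜ))
      · simp [Set.indicator, hx]
      · simp [Set.indicator, hx]
    rw [hform]
    exact (integrable_const (2:ℝ)).indicator (measurableSet_Ci i).compl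
  have h1 : (∫ x, ((Set.extremePoints ℝ
        (convexHull ℝ (Set.range x ∪ -Set.range x))).ncard : ℝ) ∂M1)
      = ∫ x, (∑ i, (if x i ∈ convexHull ℝ ((x '' {i}ᶜ) ∪ -(x '' {i}ᶜ))
          then (0:ℝ) else 2)) ∂M1 := integral_congr_ae hae_cnt
  rw [h1, integral_finset_sum _ (fun i _ => hInt i)]
  -- evaluate each summand
  have hIval : ∀ i : Fin (N+1), (∫ x, (if x i ∈ convexHull ℝ
      ((x '' {i}ᶜ) ∪ -(x '' {i}ᶜ)) then (0:ℝ) else 2) ∂M1)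
      = 2 * (volume K).toReal ^ (N+1) - 2 * J := by
    intro i
    set e := MeasurableEquiv.piFinSuccAbove (fun _ : Fin (N+1) => E2) i with he
    have hmp := measurePreserving_piFinSuccAbove (fun _ : Fin (N+1) => μ) i
    set h : E2 × (Fin N → E2) → ℝ := fun q =>
      if q.1 ∈ convexHull ℝ (range q.2 ∪ -range q.2) then (0:ℝ) else 2 with hh
    have hcomp : ∀ x : Fin (N+1) → E2,
        (if x i ∈ convexHull ℝ ((x '' {i}ᶜ) ∪ -(x '' {i}ᶜ)) then (0:ℝ) else 2) = h (e x) := by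
      intro x
      rw [hh]
      refine if_congr ?_ rfl rfl
      have h1' : (e x).1 = x i := rfl
      have h2' : (e x).2 = fun k => x (i.succAbove k) := rfl
      rw [h1', h2', image_compl_eq_range_succAbove]
    have hstep : (∫ x, (if x i ∈ convexHull ℝ
        ((x '' {i}ᶜ) ∪ -(x '' {i}ᶜ)) then (0:ℝ) else 2) ∂M1) = ∫ x, h (e x) ∂M1 := by
      congr 1
      funext x
      exact hcomp x
    rw [hstep, hmp.integral_comp e.measurableEmbedding h]
    have hIntH : Integrable h (μ.prod M0) := by
      have hform : h = Set.indicator ({q : E2 × (Fin N → E2) |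
          q.1 ∈ convexHull ℝ (range q.2 ∪ -range q.2)}ᶜ) (fun _ => (2:ℝ)) := by
        funext q
        rw [hh]
        by_cases hq : q.1 ∈ convexHull ℝ (range q.2 ∪ -range q.2)
        · simp [Set.indicator, hq]
        · simp [Set.indicator, hq]
      rw [hform]
      exact (integrable_const (2:ℝ)).indicator measurableSet_W.compl
    rw [integral_prod_symm h hIntH]
    have hinner : ∀ᵐ y ∂M0, (∫ a, h (a, y) ∂μ)
        = 2 * (volume K).toReal
          - 2 * (volume (convexHull ℝ (range y ∪ -range y))).toReal := by
      filter_upwards [haeK] with y hy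
      have hHK : convexHull ℝ (range y ∪ -range y) ⊆ K := hsubK y hy
      have hUfin : (range y ∪ -range y).Finite := by
        rw [← range_pm y]; exact finite_range _
      have hHm : MeasurableSet (convexHull ℝ (range y ∪ -range y)) :=
        (hUfin.isCompact_convexHull ℝ).isClosed.measurableSet
      have hform : (fun a => h (a, y)) = Set.indicator
          (convexHull ℝ (range y ∪ -range y))ᶜ (fun _ => (2:ℝ)) := by
        funext a
        rw [hh]
        by_cases ha : a ∈ convexHull ℝ (range y ∪ -range y)
        · simp [Set.indicator, ha]
        · simp [Set.indicator, ha]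
      rw [hform, integral_indicator_const (2:ℝ) hHm.compl]
      rw [measureReal_def, measure_compl hHm (measure_ne_top μ _)]
      rw [hμ, Measure.restrict_apply_univ, Measure.restrict_apply hHm,
        inter_eq_self_of_subset_left hHK]
      rw [ENNReal.toReal_sub_of_le (measure_mono hHK) hKfin]
      rw [smul_eq_mul]
      ring
    rw [integral_congr_ae hinner]
    rw [integral_sub (integrable_const _) (hIntVol.const_mul 2)]
    rw [integral_const, measureReal_def, integral_const_mul]
    have hM0univ : (M0 univ).toReal = (volume K).toReal ^ N := by
      rw [hM0, Measure.pi_univ]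
      rw [Finset.prod_const, Finset.card_univ, Fintype.card_fin, ENNReal.toReal_pow]
      rw [hμ, Measure.restrict_apply_univ]
    rw [hM0univ, smul_eq_mul, ← hJ]
    rw [pow_succ]
    ring
  -- sum it up
  have hsum : (∑ i : Fin (N+1), ∫ x, (if x i ∈ convexHull ℝ
      ((x '' {i}ᶜ) ∪ -(x '' {i}ᶜ)) then (0:ℝ) else 2) ∂M1)
      = (N+1 : ℝ) * (2 * (volume K).toReal ^ (N+1) - 2 * J) := by
    rw [Finset.sum_congr rfl (fun i _ => hIval i), Finset.sum_const,
      Finset.card_univ, Fintype.card_fin, nsmul_eq_mul]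
    push_cast
    ring
  rw [hsum]
  -- momentV
  have hMom : momentV 2 N K 1 = J / (volume K).toReal ^ (N+1) := by
    unfold momentV
    simp_rw [Real.rpow_one]
    rw [restrict_pi_eq K hKm N]
    rw [integral_div, ← hM0, ← hJ]
    rw [div_div, pow_succ']
  rw [hMom]
  have hcn : (volume K).toReal ^ (N+1) ≠ 0 := pow_ne_zero _ hc_pos.ne'
  field_simp

end AuxLemmas
end
end
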